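/- arXiv:math/0508533 — 6 statements merged into one kernel-verified Lean document; each statement's English description precedes it below -/
import Mathlib

section
/- For all sufficiently large Δ>0 (with the contour L and the function φ constructed for this Δ) there exist constants C>0 and γ>0 such that for every y∈ℤ² lying on one of the open positive half-axes (i.e. y=(0,y₃) with y₃>0, or y=(y₂,0) with y₂>0) with φ(y)>C: Σ_z r_{yz}·(φ(z)−φ(y)) ≤ −γ·φ(y); moreover, Σ_z s_{yz}·(φ(z)−φ(y)) takes the same value for all such y on the half-axis {y₂=0, y₃>0} with φ(y)>C, and likewise takes the same value for all such y on the half-axis {y₂>0, y₃=0} with φ(y)>C. -/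
noncomputable section

/-- The quadratic form `e(y₂,y₃) = a·y₂² + b·(y₂−y₃)²` defining the ellipse. -/
def eF (a b : ℝ) (y : ℝ × ℝ) : ℝ := a * y.1 ^ 2 + b * (y.1 - y.2) ^ 2

/-- The gradient of `eF`. -/
def gradE (a b : ℝ) (y : ℝ × ℝ) : ℝ × ℝ :=
  (2 * a * y.1 + 2 * b * (y.1 - y.2), -(2 * b * (y.1 - y.2)))

/-- Euclidean inner product on `ℝ × ℝ`. -/
def dotp (u v : ℝ × ℝ) : ℝ := u.1 * v.1 + u.2 * v.2

/-- Euclidean norm on `ℝ × ℝ`. -/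
def enorm2 (v : ℝ × ℝ) : ℝ := Real.sqrt (v.1 ^ 2 + v.2 ^ 2)

/-- `T` is a point of the ellipse in the open quadrant `{y₂<0, y₃<0}` where the
gradient of `e` is a positive multiple of `(−Δ, 1)`. -/
def IsT3 (a b Δ : ℝ) (T : ℝ × ℝ) : Prop :=
  eF a b T = 1 ∧ T.1 < 0 ∧ T.2 < 0 ∧ ∃ c > 0, gradE a b T = c • ((-Δ, 1) : ℝ × ℝ)

/-- `T` is a point of the ellipse with `y₃ < 0` where the gradient of `e`
is a positive multiple of `(1, −Δ)`. -/
def IsT2 (a b Δ : ℝ) (T : ℝ × ℝ) : Prop :=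
  eF a b T = 1 ∧ T.2 < 0 ∧ ∃ c > 0, gradE a b T = c • ((1, -Δ) : ℝ × ℝ)

/-- The configuration of the tangency points `T₂, T₃` and of the intercepts
`K₂ = (u₂,0)`, `K₃ = (0,u₃)` of the corresponding tangent lines with the axes. -/
def GoodConfig (a b Δ u₂ u₃ : ℝ) (T₂ T₃ : ℝ × ℝ) : Prop :=
  IsT2 a b Δ T₂ ∧ IsT3 a b Δ T₃ ∧ 0 < u₂ ∧ 0 < u₃ ∧
  dotp (gradE a b T₂) (((u₂, 0) : ℝ × ℝ) - T₂) = 0 ∧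
  dotp (gradE a b T₃) (((0, u₃) : ℝ × ℝ) - T₃) = 0

/-- The closed arc of the ellipse from `T₂` to `T₃` passing through
`(−a^{−1/2}, −a^{−1/2})`: the points of the ellipse whose outward normal direction
lies in the closed convex cone spanned by `(1, −Δ)` (normal at `T₂`) and
`(−Δ, 1)` (normal at `T₃`). -/
def arcE (a b Δ : ℝ) : Set (ℝ × ℝ) :=
  {y | eF a b y = 1 ∧ ∃ c₂ c₃ : ℝ, 0 ≤ c₂ ∧ 0 ≤ c₃ ∧
    gradE a b y = c₂ • ((1, -Δ) : ℝ × ℝ) + c₃ • ((-Δ, 1) : ℝ × ℝ)}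

/-- The closed contour `L`: segment `K₃K₂`, segment `K₂T₂`, the arc of the ellipse
from `T₂` to `T₃` through `(−a^{−1/2},−a^{−1/2})`, and segment `T₃K₃`. -/
def contourL (a b Δ u₂ u₃ : ℝ) (T₂ T₃ : ℝ × ℝ) : Set (ℝ × ℝ) :=
  segment ℝ ((0, u₃) : ℝ × ℝ) ((u₂, 0) : ℝ × ℝ) ∪
    segment ℝ ((u₂, 0) : ℝ × ℝ) T₂ ∪ arcE a b Δ ∪
    segment ℝ T₃ ((0, u₃) : ℝ × ℝ)

/-- `φ` is the homogeneous functional associated with the contour `L`: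
`φ(0) = 0` and, for `y ≠ 0`, `φ(y)` is positive with `y/φ(y) ∈ L`. -/
def IsPhi (L : Set (ℝ × ℝ)) (φ : ℝ × ℝ → ℝ) : Prop :=
  φ 0 = 0 ∧ ∀ y : ℝ × ℝ, y ≠ 0 → 0 < φ y ∧ (φ y)⁻¹ • y ∈ L

/-- `n` is the outward unit normal field of the contour `L` (defined except at
`K₂` and `K₃`): on the elliptic arc it is `∇e(y)/‖∇e(y)‖`, and it is constant on
each of the three straight pieces, equal to `n(T₂)` on `(K₂,T₂]`, to `n(T₃)` on
`[T₃,K₃)`, and to the normalized `(u₂⁻¹, u₃⁻¹)` on `(K₃,K₂)`. -/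
def IsN (a b Δ u₂ u₃ : ℝ) (T₂ T₃ : ℝ × ℝ) (n : ℝ × ℝ → ℝ × ℝ) : Prop :=
  (∀ y ∈ arcE a b Δ, n y = (enorm2 (gradE a b y))⁻¹ • gradE a b y) ∧
  (∀ y ∈ segment ℝ ((u₂, 0) : ℝ × ℝ) T₂, y ≠ ((u₂, 0) : ℝ × ℝ) → n y = n T₂) ∧
  (∀ y ∈ segment ℝ T₃ ((0, u₃) : ℝ × ℝ), y ≠ ((0, u₃) : ℝ × ℝ) → n y = n T₃) ∧
  (∀ y ∈ segment ℝ ((0, u₃) : ℝ × ℝ) ((u₂, 0) : ℝ × ℝ),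
    y ≠ ((0, u₃) : ℝ × ℝ) → y ≠ ((u₂, 0) : ℝ × ℝ) →
    n y = (enorm2 ((u₂⁻¹, u₃⁻¹) : ℝ × ℝ))⁻¹ • ((u₂⁻¹, u₃⁻¹) : ℝ × ℝ))

/-- Coercion of an integer lattice point to `ℝ × ℝ`. -/
def iv (y : ℤ × ℤ) : ℝ × ℝ := ((y.1 : ℝ), (y.2 : ℝ))

/-- Free-dynamics part `s_{yz}` of the transition probabilities of the embedded
relative-coordinate chain of the three-processor cascade model. -/
def sker (l1 l2 l3 : ℝ) (y z : ℤ × ℤ) : ℝ :=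
  (if z = y + (1, 0) then l2 else 0) + (if z = y + (0, 1) then l3 else 0) +
    (if z = y - (1, 1) then l1 else 0)

/-- Rollback part `r_{yz}` of the transition probabilities of the embedded
relative-coordinate chain of the three-processor cascade model
(`b2 = λ₂/(λ₂+β₁₂)`). -/
def rker (b12 b23 b2 : ℝ) (y z : ℤ × ℤ) : ℝ :=
  (if 0 < y.1 ∧ y.2 ≤ 0 ∧ z = (0, y.2) then b12 else 0) +
  (if y.1 < y.2 ∧ z = (y.1, y.1) then b23 else 0) +
  (if 0 < y.2 ∧ y.2 ≤ y.1 ∧ z.1 = 0 ∧ 0 ≤ z.2 ∧ z.2 < y.2 then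
      b12 * (1 - b2) ^ z.2.toNat * b2 else 0) +
  (if 0 < y.2 ∧ y.2 ≤ y.1 ∧ z = (0, y.2) then b12 * (1 - b2) ^ y.2.toNat else 0) +
  (if 0 < y.1 ∧ y.1 < y.2 ∧ z.1 = 0 ∧ 0 ≤ z.2 ∧ z.2 ≤ y.1 then
      b12 * (1 - b2) ^ z.2.toNat * b2 else 0) +
  (if 0 < y.1 ∧ y.1 < y.2 ∧ z = (0, y.2) then b12 * (1 - b2) ^ (y.1.toNat + 1) else 0)

/-- Total transition probability `p_{yz}` of the embedded relative-coordinate chain: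
for `z ≠ y` it is `s_{yz} + r_{yz}`, and the remaining probability mass is assigned
to staying at `y`. -/
def pker (l1 l2 l3 b12 b23 b2 : ℝ) (y z : ℤ × ℤ) : ℝ :=
  sker l1 l2 l3 y z + rker b12 b23 b2 y z +
    (if z = y then 1 - ∑' w : ℤ × ℤ, (sker l1 l2 l3 y w + rker b12 b23 b2 y w) else 0)

/-!
For `Δ > 1 + a/b` the elliptic arc of `L` lies in the open third quadrant. So `L` meets the
closed first quadrant in the segment `K₃K₂`, the open second quadrant in `T₃K₃` and the open
fourth quadrant in `K₂T₂`, and `φ` is linear on each of these cones: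
`φ y = y₂/u₂ + y₃/u₃`, `(y₃ - Δ y₂)/u₃` and `(y₂ - Δ y₃)/u₂` respectively.
If `φ(y) > 1/u₂ + 1/u₃` for `y` on a positive half-axis, the free-dynamics neighbours of `y` lie
in these cones, so the free drift is a constant. The only rollback from a positive half-axis
goes to the origin, where `φ` vanishes, so the rollback drift is `-β₂₃ φ(y)` or `-β₁₂ φ(y)`.
-/

lemma linear_mem_uIcc_of_mem_segment {p q z : ℝ × ℝ} (hz : z ∈ segment ℝ p q) (α β : ℝ) :
    α * z.1 + β * z.2 ∈ Set.uIcc (α * p.1 + β * p.2) (α * q.1 + β * q.2) := by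
  obtain ⟨s, t, hs, ht, hst, rfl⟩ := hz
  rw [← segment_eq_uIcc]
  exact ⟨s, t, hs, ht, hst, by simp only [Prod.fst_add, Prod.snd_add, Prod.smul_fst,
    Prod.smul_snd, smul_eq_mul]; ring⟩

lemma tsum_sker_mul (l1 l2 l3 : ℝ) (g : ℤ × ℤ → ℝ) (y : ℤ × ℤ) :
    ∑' z, sker l1 l2 l3 y z * g z
      = l2 * g (y + (1, 0)) + l3 * g (y + (0, 1)) + l1 * g (y - (1, 1)) := by
  rw [tsum_eq_sum (s := {y + (1, 0), y + (0, 1), y - (1, 1)})]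
  · simp only [sker, add_mul, ite_mul, zero_mul, Finset.sum_add_distrib, Finset.sum_ite_eq',
      Finset.mem_insert, Finset.mem_singleton, true_or, or_true, if_true]
  · intro z hz
    simp only [Finset.mem_insert, Finset.mem_singleton, not_or] at hz
    simp [sker, hz.1, hz.2.1, hz.2.2]

lemma rker_of_fst_eq_zero (b12 b23 b2 : ℝ) {y : ℤ × ℤ} (h₁ : y.1 = 0) (h₂ : 0 < y.2)
    (z : ℤ × ℤ) : rker b12 b23 b2 y z = if z = (0, 0) then b23 else 0 := by
  simp [rker, h₁, h₂, h₂.not_ge]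

lemma rker_of_snd_eq_zero (b12 b23 b2 : ℝ) {y : ℤ × ℤ} (h₁ : 0 < y.1) (h₂ : y.2 = 0)
    (z : ℤ × ℤ) : rker b12 b23 b2 y z = if z = (0, 0) then b12 else 0 := by
  simp [rker, h₁, h₂, h₁.not_gt]

lemma tsum_ite_mul_phi_sub {φ : ℝ × ℝ → ℝ} (hφ : φ 0 = 0) (β : ℝ) (y : ℤ × ℤ) :
    ∑' z : ℤ × ℤ, (if z = (0, 0) then β else 0) * (φ (iv z) - φ (iv y)) = -(β * φ (iv y)) := by
  rw [tsum_eq_single (0, 0) (fun z hz => by rw [if_neg hz, zero_mul])]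
  simp [iv, ← Prod.zero_eq_mk, hφ]

section Cascade

variable {L : Set (ℝ × ℝ)} {a b Δ u₂ u₃ : ℝ} {T₂ T₃ z y : ℝ × ℝ} {φ : ℝ × ℝ → ℝ} {k : ℤ}

lemma IsPhi.linear_eq_mul (hφ : IsPhi L φ) (hy : y ≠ 0) {P : ℝ × ℝ → Prop}
    (hP : ∀ t : ℝ, 0 < t → P (t • y)) {α β c : ℝ}
    (hL : ∀ z ∈ L, P z → α * z.1 + β * z.2 = c) : α * y.1 + β * y.2 = c * φ y := by
  obtain ⟨hpos, hmem⟩ := hφ.2 y hy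
  have h := hL _ hmem (hP _ (inv_pos.2 hpos))
  simp only [Prod.smul_fst, Prod.smul_snd, smul_eq_mul] at h
  rw [← h]
  field_simp

lemma IsT2.fst_sub_mul_snd (hT : IsT2 a b Δ T₂)
    (hK : dotp (gradE a b T₂) (((u₂, 0) : ℝ × ℝ) - T₂) = 0) : T₂.1 - Δ * T₂.2 = u₂ := by
  obtain ⟨-, -, c, hc, hg⟩ := hT
  rw [hg, Prod.smul_mk] at hK
  simp only [dotp, Prod.fst_sub, Prod.snd_sub, nsmul_eq_mul] at hK
  have hc' : (c : ℝ) ≠ 0 := Nat.cast_ne_zero.mpr hc.ne'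
  have := mul_left_cancel₀ hc' (show (c : ℝ) * (u₂ - T₂.1 + Δ * T₂.2) = c * 0 by linarith)
  linarith

lemma IsT3.snd_sub_mul_fst (hT : IsT3 a b Δ T₃)
    (hK : dotp (gradE a b T₃) (((0, u₃) : ℝ × ℝ) - T₃) = 0) : T₃.2 - Δ * T₃.1 = u₃ := by
  obtain ⟨-, -, -, c, hc, hg⟩ := hT
  rw [hg, Prod.smul_mk] at hK
  simp only [dotp, Prod.fst_sub, Prod.snd_sub, nsmul_eq_mul] at hK
  have hc' : (c : ℝ) ≠ 0 := Nat.cast_ne_zero.mpr hc.ne'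
  have := mul_left_cancel₀ hc' (show (c : ℝ) * (u₃ - T₃.2 + Δ * T₃.1) = c * 0 by linarith)
  linarith

lemma neg_of_mem_arcE (ha : 0 < a) (hb : 0 < b) (hΔ : 1 + a / b < Δ)
    (hy : y ∈ arcE a b Δ) : y.1 < 0 ∧ y.2 < 0 := by
  obtain ⟨he, c₂, c₃, hc₂, hc₃, hg⟩ := hy
  have hg₁ := congrArg Prod.fst hg
  have hg₂ := congrArg Prod.snd hg
  simp only [gradE, Prod.fst_add, Prod.snd_add, Prod.smul_mk, smul_eq_mul] at hg₁ hg₂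
  have hc : 0 < c₂ + c₃ := by
    by_contra! h
    obtain ⟨rfl, rfl⟩ : c₂ = 0 ∧ c₃ = 0 := ⟨by linarith, by linarith⟩
    have h₂ : y.1 - y.2 = 0 := by nlinarith
    have h₁ : y.1 = 0 := by nlinarith
    rw [eF, h₂, h₁] at he
    norm_num at he
  have hab : a / b < Δ - 1 := by linarith
  have hΔ₁ : 0 < Δ - 1 := (div_pos ha hb).trans hab
  rw [div_lt_iff₀ hb] at hab
  have hy₁ : 2 * a * y.1 = (c₂ + c₃) * (1 - Δ) := by linarith
  have hy₂ : 2 * a * (2 * b * y.2) =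
      c₂ * (2 * b * (1 - Δ) - 2 * a * Δ) + c₃ * (2 * b * (1 - Δ) + 2 * a) := by
    linear_combination 2 * b * hy₁ + 2 * a * hg₂
  constructor
  · nlinarith [mul_pos hc hΔ₁]
  · have hk₃ : 2 * b * (1 - Δ) + 2 * a < 0 := by linarith
    have hk : c₂ * (2 * b * (1 - Δ) - 2 * a * Δ) ≤ c₂ * (2 * b * (1 - Δ) + 2 * a) :=
      mul_le_mul_of_nonneg_left (by nlinarith) hc₂
    nlinarith [mul_pos ha hb, mul_pos hc (neg_pos.2 hk₃)]

lemma GoodConfig.mem_segment_K₂T₂ (hcfg : GoodConfig a b Δ u₂ u₃ T₂ T₃)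
    (hz : z ∈ segment ℝ ((u₂, 0) : ℝ × ℝ) T₂) : z.1 - Δ * z.2 = u₂ ∧ z.2 ≤ 0 := by
  have hT₂ := hcfg.1.fst_sub_mul_snd hcfg.2.2.2.2.1
  have h₁ := linear_mem_uIcc_of_mem_segment hz 1 (-Δ)
  have h₂ : z.2 ∈ Set.uIcc 0 T₂.2 := by simpa using linear_mem_uIcc_of_mem_segment hz 0 1
  rw [show 1 * T₂.1 + -Δ * T₂.2 = u₂ by linarith, show 1 * u₂ + -Δ * 0 = u₂ by ring,
    Set.uIcc_self, Set.mem_singleton_iff] at h₁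
  exact ⟨by linarith, h₂.2.trans (sup_le le_rfl hcfg.1.2.1.le)⟩

lemma GoodConfig.mem_segment_T₃K₃ (hcfg : GoodConfig a b Δ u₂ u₃ T₂ T₃)
    (hz : z ∈ segment ℝ T₃ ((0, u₃) : ℝ × ℝ)) : z.2 - Δ * z.1 = u₃ ∧ z.1 ≤ 0 := by
  have hT₃ := hcfg.2.1.snd_sub_mul_fst hcfg.2.2.2.2.2
  have h₁ := linear_mem_uIcc_of_mem_segment hz (-Δ) 1
  have h₂ : z.1 ∈ Set.uIcc T₃.1 0 := by simpa using linear_mem_uIcc_of_mem_segment hz 1 0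
  rw [show -Δ * T₃.1 + 1 * T₃.2 = u₃ by linarith, show -Δ * 0 + 1 * u₃ = u₃ by ring,
    Set.uIcc_self, Set.mem_singleton_iff] at h₁
  exact ⟨by linarith, h₂.2.trans (sup_le hcfg.2.1.2.1.le le_rfl)⟩

lemma mem_segment_K₃K₂ (hu₂ : 0 ≤ u₂) (hu₃ : 0 ≤ u₃)
    (hz : z ∈ segment ℝ ((0, u₃) : ℝ × ℝ) ((u₂, 0) : ℝ × ℝ)) :
    u₃ * z.1 + u₂ * z.2 = u₂ * u₃ ∧ 0 ≤ z.1 ∧ 0 ≤ z.2 := by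
  have h₁ := linear_mem_uIcc_of_mem_segment hz u₃ u₂
  have h₂ : z.1 ∈ Set.uIcc 0 u₂ := by simpa using linear_mem_uIcc_of_mem_segment hz 1 0
  have h₃ : z.2 ∈ Set.uIcc u₃ 0 := by simpa using linear_mem_uIcc_of_mem_segment hz 0 1
  rw [show u₃ * 0 + u₂ * u₃ = u₂ * u₃ by ring, show u₃ * u₂ + u₂ * 0 = u₂ * u₃ by ring,
    Set.uIcc_self, Set.mem_singleton_iff] at h₁
  exact ⟨h₁, (le_inf le_rfl hu₂).trans h₂.1, (le_inf hu₃ le_rfl).trans h₃.1⟩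

lemma GoodConfig.eq_of_mem_contourL_of_nonneg (hcfg : GoodConfig a b Δ u₂ u₃ T₂ T₃)
    (ha : 0 < a) (hb : 0 < b) (hΔ : 1 + a / b < Δ) (hz : z ∈ contourL a b Δ u₂ u₃ T₂ T₃)
    (h₁ : 0 ≤ z.1) (h₂ : 0 ≤ z.2) : u₃ * z.1 + u₂ * z.2 = u₂ * u₃ := by
  rcases hz with ((h | h) | h) | h
  · exact (mem_segment_K₃K₂ hcfg.2.2.1.le hcfg.2.2.2.1.le h).1
  · obtain ⟨he, hle⟩ := hcfg.mem_segment_K₂T₂ h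
    have hz₂ : z.2 = 0 := le_antisymm hle h₂
    have hz₁ : z.1 = u₂ := by rw [hz₂] at he; linarith
    rw [hz₁, hz₂]; ring
  · exact absurd h₁ (neg_of_mem_arcE ha hb hΔ h).1.not_ge
  · obtain ⟨he, hle⟩ := hcfg.mem_segment_T₃K₃ h
    have hz₁ : z.1 = 0 := le_antisymm hle h₁
    have hz₂ : z.2 = u₃ := by rw [hz₁] at he; linarith
    rw [hz₁, hz₂]; ring

lemma GoodConfig.eq_of_mem_contourL_of_neg_of_pos (hcfg : GoodConfig a b Δ u₂ u₃ T₂ T₃)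
    (ha : 0 < a) (hb : 0 < b) (hΔ : 1 + a / b < Δ) (hz : z ∈ contourL a b Δ u₂ u₃ T₂ T₃)
    (h₁ : z.1 < 0) (h₂ : 0 < z.2) : z.2 - Δ * z.1 = u₃ := by
  rcases hz with ((h | h) | h) | h
  · exact absurd (mem_segment_K₃K₂ hcfg.2.2.1.le hcfg.2.2.2.1.le h).2.1 h₁.not_ge
  · exact absurd (hcfg.mem_segment_K₂T₂ h).2 h₂.not_ge
  · exact absurd h₂ (neg_of_mem_arcE ha hb hΔ h).2.not_gt
  · exact (hcfg.mem_segment_T₃K₃ h).1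

lemma GoodConfig.eq_of_mem_contourL_of_pos_of_neg (hcfg : GoodConfig a b Δ u₂ u₃ T₂ T₃)
    (ha : 0 < a) (hb : 0 < b) (hΔ : 1 + a / b < Δ) (hz : z ∈ contourL a b Δ u₂ u₃ T₂ T₃)
    (h₁ : 0 < z.1) (h₂ : z.2 < 0) : z.1 - Δ * z.2 = u₂ := by
  rcases hz with ((h | h) | h) | h
  · exact absurd (mem_segment_K₃K₂ hcfg.2.2.1.le hcfg.2.2.2.1.le h).2.2 h₂.not_ge
  · exact (hcfg.mem_segment_K₂T₂ h).1
  · exact absurd h₁ (neg_of_mem_arcE ha hb hΔ h).1.not_gt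
  · exact absurd (hcfg.mem_segment_T₃K₃ h).2 h₁.not_ge

lemma GoodConfig.phi_eq_of_nonneg (hcfg : GoodConfig a b Δ u₂ u₃ T₂ T₃)
    (ha : 0 < a) (hb : 0 < b) (hΔ : 1 + a / b < Δ) (hφ : IsPhi (contourL a b Δ u₂ u₃ T₂ T₃) φ)
    (hy : y ≠ 0) (h₁ : 0 ≤ y.1) (h₂ : 0 ≤ y.2) : φ y = y.1 / u₂ + y.2 / u₃ := by
  have h := hφ.linear_eq_mul hy (P := fun z => 0 ≤ z.1 ∧ 0 ≤ z.2)
    (fun t ht => ⟨mul_nonneg ht.le h₁, mul_nonneg ht.le h₂⟩)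
    (fun z hz hP => hcfg.eq_of_mem_contourL_of_nonneg ha hb hΔ hz hP.1 hP.2)
  have := hcfg.2.2.1.ne'
  have := hcfg.2.2.2.1.ne'
  field_simp
  linarith

lemma GoodConfig.phi_eq_of_neg_of_pos (hcfg : GoodConfig a b Δ u₂ u₃ T₂ T₃)
    (ha : 0 < a) (hb : 0 < b) (hΔ : 1 + a / b < Δ) (hφ : IsPhi (contourL a b Δ u₂ u₃ T₂ T₃) φ)
    (h₁ : y.1 < 0) (h₂ : 0 < y.2) : φ y = (y.2 - Δ * y.1) / u₃ := by
  have h := hφ.linear_eq_mul (by rintro rfl; exact h₁.false) (P := fun z => z.1 < 0 ∧ 0 < z.2)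
    (fun t ht => ⟨mul_neg_of_pos_of_neg ht h₁, mul_pos ht h₂⟩) (α := -Δ) (β := 1) (c := u₃)
    (fun z hz hP => by linarith [hcfg.eq_of_mem_contourL_of_neg_of_pos ha hb hΔ hz hP.1 hP.2])
  rw [eq_div_iff hcfg.2.2.2.1.ne']
  linarith

lemma GoodConfig.phi_eq_of_pos_of_neg (hcfg : GoodConfig a b Δ u₂ u₃ T₂ T₃)
    (ha : 0 < a) (hb : 0 < b) (hΔ : 1 + a / b < Δ) (hφ : IsPhi (contourL a b Δ u₂ u₃ T₂ T₃) φ)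
    (h₁ : 0 < y.1) (h₂ : y.2 < 0) : φ y = (y.1 - Δ * y.2) / u₂ := by
  have h := hφ.linear_eq_mul (by rintro rfl; exact h₂.false) (P := fun z => 0 < z.1 ∧ z.2 < 0)
    (fun t ht => ⟨mul_pos ht h₁, mul_neg_of_pos_of_neg ht h₂⟩) (α := 1) (β := -Δ) (c := u₂)
    (fun z hz hP => by linarith [hcfg.eq_of_mem_contourL_of_pos_of_neg ha hb hΔ hz hP.1 hP.2])
  rw [eq_div_iff hcfg.2.2.1.ne']
  linarith

lemma GoodConfig.two_le_of_lt_phi_vertical (hcfg : GoodConfig a b Δ u₂ u₃ T₂ T₃)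
    (ha : 0 < a) (hb : 0 < b) (hΔ : 1 + a / b < Δ) (hφ : IsPhi (contourL a b Δ u₂ u₃ T₂ T₃) φ)
    (hk : 0 < k) (hC : 1 / u₂ + 1 / u₃ < φ (iv (0, k))) : 2 ≤ k := by
  have hk' : (0 : ℝ) < k := by exact_mod_cast hk
  rw [hcfg.phi_eq_of_nonneg ha hb hΔ hφ (by simp [iv]; omega) (by simp [iv])
    (by simp [iv]; linarith)] at hC
  simp only [iv, Int.cast_zero, zero_div, zero_add] at hC
  have : 1 / u₃ < k / u₃ := by linarith [one_div_pos.2 hcfg.2.2.1]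
  have : (1 : ℝ) < k := (div_lt_div_iff_of_pos_right hcfg.2.2.2.1).1 this
  exact_mod_cast this

lemma GoodConfig.two_le_of_lt_phi_horizontal (hcfg : GoodConfig a b Δ u₂ u₃ T₂ T₃)
    (ha : 0 < a) (hb : 0 < b) (hΔ : 1 + a / b < Δ) (hφ : IsPhi (contourL a b Δ u₂ u₃ T₂ T₃) φ)
    (hk : 0 < k) (hC : 1 / u₂ + 1 / u₃ < φ (iv (k, 0))) : 2 ≤ k := by
  have hk' : (0 : ℝ) < k := by exact_mod_cast hk
  rw [hcfg.phi_eq_of_nonneg ha hb hΔ hφ (by simp [iv]; omega)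
    (by simp [iv]; linarith) (by simp [iv])] at hC
  simp only [iv, Int.cast_zero, zero_div, add_zero] at hC
  have : 1 / u₂ < k / u₂ := by linarith [one_div_pos.2 hcfg.2.2.2.1]
  have : (1 : ℝ) < k := (div_lt_div_iff_of_pos_right hcfg.2.2.1).1 this
  exact_mod_cast this

lemma GoodConfig.tsum_sker_phi_vertical (hcfg : GoodConfig a b Δ u₂ u₃ T₂ T₃)
    (ha : 0 < a) (hb : 0 < b) (hΔ : 1 + a / b < Δ) (hφ : IsPhi (contourL a b Δ u₂ u₃ T₂ T₃) φ)
    (l1 l2 l3 : ℝ) (hk : 2 ≤ k) :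
    ∑' z, sker l1 l2 l3 (0, k) z * (φ (iv z) - φ (iv (0, k)))
      = l2 / u₂ + l3 / u₃ + l1 * (Δ - 1) / u₃ := by
  have hk' : (2 : ℝ) ≤ k := by exact_mod_cast hk
  rw [tsum_sker_mul]
  simp only [iv, Prod.mk_add_mk, Prod.mk_sub_mk, Int.cast_add, Int.cast_sub, Int.cast_zero,
    Int.cast_one, Int.cast_neg, zero_add, add_zero, zero_sub]
  have h₀ : φ (0, (k : ℝ)) = k / u₃ := by
    simpa using hcfg.phi_eq_of_nonneg ha hb hΔ hφ (y := (0, (k : ℝ)))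
      (by simp; linarith) le_rfl (by simp; linarith)
  have h₁ : φ (1, (k : ℝ)) = 1 / u₂ + k / u₃ := by
    simpa using hcfg.phi_eq_of_nonneg ha hb hΔ hφ (y := (1, (k : ℝ)))
      (by simp) zero_le_one (by simp; linarith)
  have h₂ : φ (0, (k : ℝ) + 1) = (k + 1) / u₃ := by
    simpa using hcfg.phi_eq_of_nonneg ha hb hΔ hφ (y := (0, (k : ℝ) + 1))
      (by simp; linarith) le_rfl (by simp; linarith)
  have h₃ : φ (-1, (k : ℝ) - 1) = (k - 1 + Δ) / u₃ := by
    rw [hcfg.phi_eq_of_neg_of_pos ha hb hΔ hφ (by simp) (by simp; linarith)]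
    ring
  rw [h₀, h₁, h₂, h₃]
  ring

lemma GoodConfig.tsum_sker_phi_horizontal (hcfg : GoodConfig a b Δ u₂ u₃ T₂ T₃)
    (ha : 0 < a) (hb : 0 < b) (hΔ : 1 + a / b < Δ) (hφ : IsPhi (contourL a b Δ u₂ u₃ T₂ T₃) φ)
    (l1 l2 l3 : ℝ) (hk : 2 ≤ k) :
    ∑' z, sker l1 l2 l3 (k, 0) z * (φ (iv z) - φ (iv (k, 0)))
      = l2 / u₂ + l3 / u₃ + l1 * (Δ - 1) / u₂ := by
  have hk' : (2 : ℝ) ≤ k := by exact_mod_cast hk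
  rw [tsum_sker_mul]
  simp only [iv, Prod.mk_add_mk, Prod.mk_sub_mk, Int.cast_add, Int.cast_sub, Int.cast_zero,
    Int.cast_one, Int.cast_neg, zero_add, add_zero, zero_sub]
  have h₀ : φ ((k : ℝ), 0) = k / u₂ := by
    simpa using hcfg.phi_eq_of_nonneg ha hb hΔ hφ (y := ((k : ℝ), 0))
      (by simp; linarith) (by simp; linarith) le_rfl
  have h₁ : φ ((k : ℝ) + 1, 0) = (k + 1) / u₂ := by
    simpa using hcfg.phi_eq_of_nonneg ha hb hΔ hφ (y := ((k : ℝ) + 1, 0))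
      (by simp; linarith) (by simp; linarith) le_rfl
  have h₂ : φ ((k : ℝ), 1) = k / u₂ + 1 / u₃ := by
    simpa using hcfg.phi_eq_of_nonneg ha hb hΔ hφ (y := ((k : ℝ), 1))
      (by simp) (by simp; linarith) zero_le_one
  have h₃ : φ ((k : ℝ) - 1, -1) = (k - 1 + Δ) / u₂ := by
    rw [hcfg.phi_eq_of_pos_of_neg ha hb hΔ hφ (by simp; linarith) (by simp)]
    ring
  rw [h₀, h₁, h₂, h₃]
  ring

end Cascade

theorem stmt13_general (l1 l2 l3 b12 b23 : ℝ)
    (hb12 : 0 < b12) (hb23 : 0 < b23)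
    (a b : ℝ) (ha : 0 < a) (hb : 0 < b) :
    ∃ Δ₀ > (0 : ℝ), ∀ Δ > Δ₀, ∀ u₂ u₃ : ℝ, ∀ T₂ T₃ : ℝ × ℝ,
      GoodConfig a b Δ u₂ u₃ T₂ T₃ →
      ∀ φ : ℝ × ℝ → ℝ, IsPhi (contourL a b Δ u₂ u₃ T₂ T₃) φ →
      ∃ C > (0 : ℝ), ∃ γ > (0 : ℝ),
        (∀ y : ℤ × ℤ, ((y.1 = 0 ∧ 0 < y.2) ∨ (0 < y.1 ∧ y.2 = 0)) → C < φ (iv y) →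
          (∑' z : ℤ × ℤ, rker b12 b23 (l2 / (l2 + b12)) y z * (φ (iv z) - φ (iv y)))
            ≤ -(γ * φ (iv y))) ∧
        (∀ y y' : ℤ × ℤ, y.1 = 0 → 0 < y.2 → C < φ (iv y) →
          y'.1 = 0 → 0 < y'.2 → C < φ (iv y') →
          (∑' z : ℤ × ℤ, sker l1 l2 l3 y z * (φ (iv z) - φ (iv y)))
            = ∑' z : ℤ × ℤ, sker l1 l2 l3 y' z * (φ (iv z) - φ (iv y'))) ∧
        (∀ y y' : ℤ × ℤ, 0 < y.1 → y.2 = 0 → C < φ (iv y) →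
          0 < y'.1 → y'.2 = 0 → C < φ (iv y') →
          (∑' z : ℤ × ℤ, sker l1 l2 l3 y z * (φ (iv z) - φ (iv y)))
            = ∑' z : ℤ × ℤ, sker l1 l2 l3 y' z * (φ (iv z) - φ (iv y'))) := by
  refine ⟨1 + a / b, by linarith [div_pos ha hb], fun Δ hΔ u₂ u₃ T₂ T₃ hcfg φ hφ => ?_⟩
  have hC : 0 < 1 / u₂ + 1 / u₃ := by have := hcfg.2.2.1; have := hcfg.2.2.2.1; positivity
  refine ⟨1 / u₂ + 1 / u₃, hC, min b12 b23, lt_min hb12 hb23, ?_, ?_, ?_⟩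
  · rintro y (⟨h₁, h₂⟩ | ⟨h₁, h₂⟩) hy
    · simp_rw [rker_of_fst_eq_zero _ _ _ h₁ h₂, tsum_ite_mul_phi_sub hφ.1]
      exact neg_le_neg (mul_le_mul_of_nonneg_right (min_le_right _ _) (hC.trans hy).le)
    · simp_rw [rker_of_snd_eq_zero _ _ _ h₁ h₂, tsum_ite_mul_phi_sub hφ.1]
      exact neg_le_neg (mul_le_mul_of_nonneg_right (min_le_left _ _) (hC.trans hy).le)
  · rintro ⟨_, k⟩ ⟨_, k'⟩ rfl hk hy rfl hk' hy'
    rw [hcfg.tsum_sker_phi_vertical ha hb hΔ hφ l1 l2 l3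
        (hcfg.two_le_of_lt_phi_vertical ha hb hΔ hφ hk hy),
      hcfg.tsum_sker_phi_vertical ha hb hΔ hφ l1 l2 l3
        (hcfg.two_le_of_lt_phi_vertical ha hb hΔ hφ hk' hy')]
  · rintro ⟨k, _⟩ ⟨k', _⟩ hk rfl hy hk' rfl hy'
    rw [hcfg.tsum_sker_phi_horizontal ha hb hΔ hφ l1 l2 l3
        (hcfg.two_le_of_lt_phi_horizontal ha hb hΔ hφ hk hy),
      hcfg.tsum_sker_phi_horizontal ha hb hΔ hφ l1 l2 l3
        (hcfg.two_le_of_lt_phi_horizontal ha hb hΔ hφ hk' hy')]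

/-- Lemma about the positive half-axes: for all sufficiently large `Δ`
there are `C > 0`, `γ > 0` such that for every `y ∈ ℤ²` on an open positive half-axis
(`y = (0,y₃)`, `y₃ > 0`, or `y = (y₂,0)`, `y₂ > 0`) with `φ(y) > C`:
`Σ_z r_{yz}(φ(z) − φ(y)) ≤ −γ·φ(y)`; moreover `Σ_z s_{yz}(φ(z) − φ(y))` takes the
same value for all such `y` on the half-axis `{y₂ = 0, y₃ > 0}` with `φ(y) > C`, and
likewise on the half-axis `{y₂ > 0, y₃ = 0}` with `φ(y) > C`. -/
theorem stmt13 (l1 l2 l3 b12 b23 : ℝ)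
    (hl1 : 0 < l1) (hl2 : 0 < l2) (hl3 : 0 < l3) (hb12 : 0 < b12) (hb23 : 0 < b23)
    (hsum : l1 + l2 + l3 + b12 + b23 = 1)
    (a b : ℝ) (ha : 0 < a) (hb : 0 < b) :
    ∃ Δ₀ > (0 : ℝ), ∀ Δ > Δ₀, ∀ u₂ u₃ : ℝ, ∀ T₂ T₃ : ℝ × ℝ,
      GoodConfig a b Δ u₂ u₃ T₂ T₃ →
      ∀ φ : ℝ × ℝ → ℝ, IsPhi (contourL a b Δ u₂ u₃ T₂ T₃) φ →
      ∃ C > (0 : ℝ), ∃ γ > (0 : ℝ),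
        (∀ y : ℤ × ℤ, ((y.1 = 0 ∧ 0 < y.2) ∨ (0 < y.1 ∧ y.2 = 0)) → C < φ (iv y) →
          (∑' z : ℤ × ℤ, rker b12 b23 (l2 / (l2 + b12)) y z * (φ (iv z) - φ (iv y)))
            ≤ -(γ * φ (iv y))) ∧
        (∀ y y' : ℤ × ℤ, y.1 = 0 → 0 < y.2 → C < φ (iv y) →
          y'.1 = 0 → 0 < y'.2 → C < φ (iv y') →
          (∑' z : ℤ × ℤ, sker l1 l2 l3 y z * (φ (iv z) - φ (iv y)))
            = ∑' z : ℤ × ℤ, sker l1 l2 l3 y' z * (φ (iv z) - φ (iv y'))) ∧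
        (∀ y y' : ℤ × ℤ, 0 < y.1 → y.2 = 0 → C < φ (iv y) →
          0 < y'.1 → y'.2 = 0 → C < φ (iv y') →
          (∑' z : ℤ × ℤ, sker l1 l2 l3 y z * (φ (iv z) - φ (iv y)))
            = ∑' z : ℤ × ℤ, sker l1 l2 l3 y' z * (φ (iv z) - φ (iv y'))) :=
  stmt13_general l1 l2 l3 b12 b23 hb12 hb23 a b ha hb
end
end

section
/- Assume λ₁<λ₂ and λ₁<λ₃. Then there exist a function f:ℤ²→[0,∞), a constant ε>0 and a finite set A⊆ℤ² such that Σ_z p_{yz}·f(z) − f(y) < −ε for every y∈ℤ²∖A, and Σ_z p_{yz}·f(z) < ∞ for every y∈A (i.e. the Foster–Lyapunov drift criterion for ergodicity is satisfied by the embedded relative-coordinate chain of the three-processor cascade model). -/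
noncomputable section

/-!
Write `y = (a, b)` and `δ = min (λ₂ - λ₁) (λ₃ - λ₁) > 0`. The free dynamics drift by
`(λ₂ - λ₁, λ₃ - λ₁)`, so in the quadrant `a, b ≤ 0` the function `max (-a) (-b)` decreases at rate
at least `δ` off the diagonal; along the diagonal it is smoothed by a Huber function whose second
differences are at most `δ / 4`. Adding `δ / 4 * (a⁺ + (b - a)⁺)` gives a function that no rollback
increases, and that the rollback `β₁₂` (which resets `a` to `0`), resp. `β₂₃` (which resets `b` to
`a`), decreases by an amount proportional to `a`, resp. `b - a`. Once `a`, resp. `b - a`, is large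
this beats the drift of the free dynamics, which is bounded. For `a ≥ 0` and `b` far below `0` it
is the free drift of `b` that wins.
-/

namespace Cascade

def InRollbackRange (y z : ℤ × ℤ) : Prop :=
  (y.1 < y.2 ∧ z = (y.1, y.1)) ∨ (0 < y.1 ∧ z.1 = 0 ∧ min y.2 0 ≤ z.2 ∧ z.2 ≤ y.2)

section rker

variable {b12 b23 q : ℝ}

lemma rker_eq_zero_of_not_inRollbackRange {y z : ℤ × ℤ} (h : ¬InRollbackRange y z) :
    rker b12 b23 q y z = 0 := by
  obtain ⟨y1, y2⟩ := y
  obtain ⟨z1, z2⟩ := z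
  simp only [InRollbackRange, Prod.mk.injEq, not_or, not_and_or, not_lt, not_le] at h
  unfold rker
  simp only [Prod.mk.injEq]
  rw [if_neg, if_neg, if_neg, if_neg, if_neg, if_neg] <;> first | omega | norm_num

lemma rker_nonneg (hb12 : 0 ≤ b12) (hb23 : 0 ≤ b23) (hq0 : 0 ≤ q) (hq1 : q ≤ 1)
    (y z : ℤ × ℤ) : 0 ≤ rker b12 b23 q y z := by
  have h1q : 0 ≤ 1 - q := by linarith
  unfold rker
  positivity

lemma le_rker_diag (hb12 : 0 ≤ b12) (hq0 : 0 ≤ q) (hq1 : q ≤ 1) {y : ℤ × ℤ}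
    (h : y.1 < y.2) : b23 ≤ rker b12 b23 q y (y.1, y.1) := by
  have h1q : 0 ≤ 1 - q := by linarith
  unfold rker
  rw [if_pos (show y.1 < y.2 ∧ (y.1, y.1) = (y.1, y.1) from ⟨h, rfl⟩)]
  refine le_add_of_le_of_nonneg (le_add_of_le_of_nonneg (le_add_of_le_of_nonneg
    (le_add_of_le_of_nonneg (le_add_of_nonneg_left ?_) ?_) ?_) ?_) ?_ <;> positivity

lemma le_rker_reset (hb12 : 0 ≤ b12) (hb23 : 0 ≤ b23) (hq0 : 0 ≤ q) (hq1 : q ≤ 1)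
    {y : ℤ × ℤ} (h : 0 < y.1) : b12 * q ≤ rker b12 b23 q y (0, min y.2 0) := by
  have h1q : 0 ≤ 1 - q := by linarith
  obtain ⟨a, b⟩ := y
  dsimp only at h
  unfold rker
  dsimp only
  rcases le_or_gt b 0 with hb | hb
  · rw [min_eq_left hb, if_pos (show 0 < a ∧ b ≤ 0 ∧ ((0 : ℤ), b) = (0, b) from ⟨h, hb, rfl⟩)]
    refine le_add_of_le_of_nonneg (le_add_of_le_of_nonneg (le_add_of_le_of_nonneg
      (le_add_of_le_of_nonneg (le_add_of_le_of_nonneg ?_ ?_) ?_) ?_) ?_) ?_ <;>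
      first | positivity | nlinarith
  rw [min_eq_right hb.le]
  rcases le_or_gt b a with hab | hab
  · rw [if_pos (show 0 < b ∧ b ≤ a ∧ (0 : ℤ) = 0 ∧ (0 : ℤ) ≤ 0 ∧ (0 : ℤ) < b from
      ⟨hb, hab, rfl, le_rfl, hb⟩)]
    refine le_add_of_le_of_nonneg (le_add_of_le_of_nonneg (le_add_of_le_of_nonneg
      (le_add_of_nonneg_of_le ?_ ?_) ?_) ?_) ?_ <;> first | positivity | simp
  · rw [if_pos (show 0 < a ∧ a < b ∧ (0 : ℤ) = 0 ∧ (0 : ℤ) ≤ 0 ∧ (0 : ℤ) ≤ a from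
      ⟨h, hab, rfl, le_rfl, h.le⟩)]
    refine le_add_of_le_of_nonneg (le_add_of_nonneg_of_le ?_ ?_) ?_ <;> first | positivity | simp

lemma summable_rker_mul (y : ℤ × ℤ) (g : ℤ × ℤ → ℝ) :
    Summable fun z => rker b12 b23 q y z * g z := by
  refine summable_of_ne_finset_zero
    (s := insert (y.1, y.1) ((Finset.Icc (min y.2 0) y.2).image fun j => ((0 : ℤ), j))) ?_
  intro z hz
  rw [rker_eq_zero_of_not_inRollbackRange, zero_mul]
  rintro (⟨-, rfl⟩ | ⟨-, h₁, h₂, h₃⟩)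
  · exact hz (Finset.mem_insert_self _ _)
  · exact hz (Finset.mem_insert_of_mem
      (Finset.mem_image.2 ⟨z.2, Finset.mem_Icc.2 ⟨h₂, h₃⟩, by rw [← h₁]⟩))

end rker

lemma hasSum_ite_eq_mul {α : Type*} [DecidableEq α] (w : α) (c : ℝ) (g : α → ℝ) :
    HasSum (fun z => (if z = w then c else 0) * g z) (c * g w) := by
  simpa using hasSum_single (f := fun z => (if z = w then c else 0) * g z) w
    (fun z hz => by simp [hz])

lemma hasSum_sker_mul (l1 l2 l3 : ℝ) (y : ℤ × ℤ) (g : ℤ × ℤ → ℝ) :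
    HasSum (fun z => sker l1 l2 l3 y z * g z)
      (l2 * g (y.1 + 1, y.2) + l3 * g (y.1, y.2 + 1) + l1 * g (y.1 - 1, y.2 - 1)) := by
  have e₁ : y + (1, 0) = (y.1 + 1, y.2) := by ext <;> simp
  have e₂ : y + (0, 1) = (y.1, y.2 + 1) := by ext <;> simp
  have e₃ : y - (1, 1) = (y.1 - 1, y.2 - 1) := by ext <;> simp
  simp only [sker, add_mul, e₁, e₂, e₃]
  exact ((hasSum_ite_eq_mul _ _ g).add (hasSum_ite_eq_mul _ _ g)).add (hasSum_ite_eq_mul _ _ g)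

def freeDrift (l1 l2 l3 : ℝ) (F : ℤ × ℤ → ℝ) (y : ℤ × ℤ) : ℝ :=
  l2 * (F (y.1 + 1, y.2) - F y) + l3 * (F (y.1, y.2 + 1) - F y) +
    l1 * (F (y.1 - 1, y.2 - 1) - F y)

def rollbackDrift (b12 b23 q : ℝ) (F : ℤ × ℤ → ℝ) (y : ℤ × ℤ) : ℝ :=
  ∑' z, rker b12 b23 q y z * (F z - F y)

def drift (l1 l2 l3 b12 b23 q : ℝ) (F : ℤ × ℤ → ℝ) (y : ℤ × ℤ) : ℝ :=
  freeDrift l1 l2 l3 F y + rollbackDrift b12 b23 q F y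

lemma hasSum_pker_mul (l1 l2 l3 b12 b23 q : ℝ) (F : ℤ × ℤ → ℝ) (y : ℤ × ℤ) :
    HasSum (fun z => pker l1 l2 l3 b12 b23 q y z * F z) (F y + drift l1 l2 l3 b12 b23 q F y) := by
  have hs₁ := hasSum_sker_mul l1 l2 l3 y fun _ => 1
  have hr₁ := (summable_rker_mul (b12 := b12) (b23 := b23) (q := q) y fun _ => 1).hasSum
  have hrF := (summable_rker_mul (b12 := b12) (b23 := b23) (q := q) y F).hasSum
  simp only [mul_one] at hs₁ hr₁
  have hS := (hs₁.add hr₁).tsum_eq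
  have hR : rollbackDrift b12 b23 q F y =
      ∑' z, rker b12 b23 q y z * F z - (∑' z, rker b12 b23 q y z) * F y := by
    refine HasSum.tsum_eq ?_
    simpa [mul_sub] using hrF.sub (hr₁.mul_right (F y))
  convert ((hasSum_sker_mul l1 l2 l3 y F).add hrF).add
    (hasSum_ite_eq_mul y (1 - ∑' w, (sker l1 l2 l3 y w + rker b12 b23 q y w)) F) using 1
  · funext z; simp only [pker]; ring
  · rw [drift, hS, hR, freeDrift]; ring

lemma drift_le {l1 l2 l3 b12 b23 q : ℝ} (hl1 : 0 ≤ l1) (hl2 : 0 ≤ l2) (hl3 : 0 ≤ l3)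
    {F : ℤ × ℤ → ℝ} {a b : ℤ} {u₁ u₂ u₃ r : ℝ} (h₁ : F (a + 1, b) - F (a, b) ≤ u₁)
    (h₂ : F (a, b + 1) - F (a, b) ≤ u₂) (h₃ : F (a - 1, b - 1) - F (a, b) ≤ u₃)
    (hr : rollbackDrift b12 b23 q F (a, b) ≤ r) :
    drift l1 l2 l3 b12 b23 q F (a, b) ≤ l2 * u₁ + l3 * u₂ + l1 * u₃ + r := by
  unfold drift freeDrift
  have := mul_le_mul_of_nonneg_left h₁ hl2
  have := mul_le_mul_of_nonneg_left h₂ hl3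
  have := mul_le_mul_of_nonneg_left h₃ hl1
  linarith

lemma rollbackDrift_le {b12 b23 q : ℝ} (hb12 : 0 ≤ b12) (hb23 : 0 ≤ b23) (hq0 : 0 ≤ q)
    (hq1 : q ≤ 1) {F : ℤ × ℤ → ℝ} {y : ℤ × ℤ} (hF : ∀ z, InRollbackRange y z → F z ≤ F y)
    (z₀ : ℤ × ℤ) : rollbackDrift b12 b23 q F y ≤ rker b12 b23 q y z₀ * (F z₀ - F y) := by
  have hnonpos : ∀ z, rker b12 b23 q y z * (F z - F y) ≤ 0 := by
    intro z
    by_cases h : InRollbackRange y z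
    · exact mul_nonpos_of_nonneg_of_nonpos (rker_nonneg hb12 hb23 hq0 hq1 y z)
        (sub_nonpos.2 (hF z h))
    · simp [rker_eq_zero_of_not_inRollbackRange h]
  have := (summable_rker_mul y fun z => F z - F y).neg.le_tsum z₀
    fun z _ => neg_nonneg.2 (hnonpos z)
  rw [tsum_neg] at this
  unfold rollbackDrift
  linarith

/-- The Moreau envelope `t ↦ inf_s (max s 0 + (t - s) ^ 2 / (2 * T))` of the positive part,
written with its minimiser `s = t - clamp t 0 T`: it is `0` for `t ≤ 0`, `t ^ 2 / (2 * T)` on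
`[0, T]` and `t - T / 2` beyond. -/
def huber (T t : ℝ) : ℝ := max (t - max 0 (min t T)) 0 + max 0 (min t T) ^ 2 / (2 * T)

section huber

variable {T : ℝ}

lemma huber_nonneg (hT : 0 ≤ T) (t : ℝ) : 0 ≤ huber T t := by
  unfold huber; positivity

lemma huber_of_nonpos {t : ℝ} (ht : t ≤ 0) : huber T t = 0 := by
  simp [huber, ht]

lemma huber_of_le (hT : 0 < T) {t : ℝ} (ht : T ≤ t) : huber T t = t - T / 2 := by
  rw [huber, min_eq_right ht, max_eq_right hT.le, max_eq_left (by linarith)]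
  field_simp
  ring

lemma huber_le (hT : 0 < T) (t s : ℝ) : huber T t ≤ max s 0 + (t - s) ^ 2 / (2 * T) := by
  have hs := le_max_left s 0
  have hs0 := le_max_right s 0
  rcases le_total t 0 with ht0 | ht0
  · rw [huber_of_nonpos ht0]; positivity
  rcases le_total t T with htT | htT
  · rw [huber, min_eq_left htT, max_eq_right ht0, sub_self, max_self, zero_add,
      div_le_iff₀ (by positivity), add_mul, div_mul_cancel₀ _ (by positivity)]
    rcases le_total s 0 with hs' | hs'
    · nlinarith
    · rw [max_eq_left hs']; nlinarith
  · rw [huber_of_le hT htT]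
    nlinarith [div_nonneg (sq_nonneg (t - s - T)) (by positivity : (0 : ℝ) ≤ 2 * T),
      (by field_simp; ring : s + (t - s) ^ 2 / (2 * T) - (t - T / 2) = (t - s - T) ^ 2 / (2 * T))]

lemma huber_le_add (hT : 0 < T) (t t' : ℝ) : huber T t' ≤ huber T t + max (t' - t) 0 := by
  set c := max 0 (min t T)
  have hmax : max (t - c + (t' - t)) 0 ≤ max (t - c) 0 + max (t' - t) 0 := by
    simpa using max_add_add_le_max_add_max (a := t - c) (b := t' - t) (c := (0 : ℝ)) (d := 0)
  have := huber_le hT t' (t - c + (t' - t))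
  rw [show t' - (t - c + (t' - t)) = c by ring] at this
  have ht : huber T t = max (t - c) 0 + c ^ 2 / (2 * T) := rfl
  linarith

lemma huber_monotone (hT : 0 < T) : Monotone (huber T) := fun t t' h => by
  have := huber_le_add hT t' t
  rw [max_eq_right (by linarith)] at this
  linarith

lemma huber_add_one_add_huber_sub_one_le (hT : 0 < T) (t : ℝ) :
    huber T (t + 1) + huber T (t - 1) ≤ 2 * huber T t + 1 / T := by
  set c := max 0 (min t T)
  have hp := huber_le hT (t + 1) (t - c)
  have hm := huber_le hT (t - 1) (t - c)
  have : (t + 1 - (t - c)) ^ 2 / (2 * T) + (t - 1 - (t - c)) ^ 2 / (2 * T)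
      = 2 * (c ^ 2 / (2 * T)) + 1 / T := by field_simp; ring
  have ht : huber T t = max (t - c) 0 + c ^ 2 / (2 * T) := rfl
  linarith

end huber

def smoothMax (T p r : ℝ) : ℝ := p + huber T (r - p)

lemma smoothMax_le_add {T : ℝ} (hT : 0 < T) (p r p' r' : ℝ) :
    smoothMax T p' r' ≤ smoothMax T p r + max (p' - p) (r' - r) := by
  have h := huber_le_add hT (r - p) (r' - p')
  have : max (r' - p' - (r - p)) 0 + (p' - p) ≤ max (p' - p) (r' - r) := by
    rcases le_total (r' - p' - (r - p)) 0 with hx | hx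
    · rw [max_eq_right hx, zero_add]; exact le_max_left _ _
    · rw [max_eq_left hx]; linarith [le_max_right (p' - p) (r' - r)]
  unfold smoothMax; linarith

def lyap (δ : ℝ) (y : ℤ × ℤ) : ℝ :=
  δ / 4 * (max (y.1 : ℝ) 0 + max ((y.2 : ℝ) - y.1) 0) +
    smoothMax (4 / δ) (max (-(y.1 : ℝ)) 0) (max (-(y.2 : ℝ)) 0)

section lyap

variable {δ : ℝ}

lemma lyap_nonneg (hδ : 0 < δ) (y : ℤ × ℤ) : 0 ≤ lyap δ y := by
  have := huber_nonneg (T := 4 / δ) (by positivity)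
    (max (-(y.2 : ℝ)) 0 - max (-(y.1 : ℝ)) 0)
  unfold lyap smoothMax; positivity

lemma lyap_sub_le (hδ : 0 < δ) (a b a' b' : ℤ) :
    lyap δ (a', b') - lyap δ (a, b) ≤
      δ / 4 * (max ((a' : ℝ) - a) 0 + max ((b' : ℝ) - a' - (b - a)) 0) +
        max (max ((a : ℝ) - a') 0) (max ((b : ℝ) - b') 0) := by
  have h₁ := max_sub_max_le_max (a' : ℝ) 0 a 0
  have h₂ := max_sub_max_le_max ((b' : ℝ) - a') 0 (b - a) 0
  have h₃ := max_sub_max_le_max (-(a' : ℝ)) 0 (-a) 0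
  have h₄ := max_sub_max_le_max (-(b' : ℝ)) 0 (-b) 0
  have h₅ := smoothMax_le_add (T := 4 / δ) (by positivity)
    (max (-(a : ℝ)) 0) (max (-(b : ℝ)) 0) (max (-(a' : ℝ)) 0) (max (-(b' : ℝ)) 0)
  simp only [sub_self, sub_neg_eq_add, neg_add_eq_sub] at h₁ h₂ h₃ h₄
  have h₆ := max_le_max h₃ h₄
  unfold lyap
  dsimp only
  nlinarith

lemma lyap_right_sub_le (hδ : 0 < δ) (a b : ℤ) :
    lyap δ (a + 1, b) - lyap δ (a, b) ≤ δ / 4 := by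
  simpa using lyap_sub_le hδ a b (a + 1) b

lemma lyap_up_sub_le (hδ : 0 < δ) (a b : ℤ) :
    lyap δ (a, b + 1) - lyap δ (a, b) ≤ δ / 4 := by
  simpa using lyap_sub_le hδ a b a (b + 1)

lemma lyap_diag_sub_le (hδ : 0 < δ) (a b : ℤ) :
    lyap δ (a - 1, b - 1) - lyap δ (a, b) ≤ 1 := by
  simpa using lyap_sub_le hδ a b (a - 1) (b - 1)

lemma lyap_of_nonneg {a : ℤ} (ha : 0 ≤ a) (b : ℤ) :
    lyap δ (a, b) = δ / 4 * max (a : ℝ) b + huber (4 / δ) (max (-(b : ℝ)) 0) := by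
  have ha' : (0 : ℝ) ≤ a := by exact_mod_cast ha
  have : max (a : ℝ) 0 + max ((b : ℝ) - a) 0 = max (a : ℝ) b := by
    rcases le_total (a : ℝ) b with h | h
    · rw [max_eq_left ha', max_eq_left (by linarith), max_eq_right h]; ring
    · rw [max_eq_left ha', max_eq_right (by linarith), max_eq_left h]; ring
  rw [lyap, smoothMax, this, max_eq_right (by linarith : -(a : ℝ) ≤ 0), sub_zero, zero_add]

lemma lyap_of_nonpos_of_le {a b : ℤ} (ha : a ≤ 0) (hab : a ≤ b) :
    lyap δ (a, b) = δ / 4 * ((b : ℝ) - a) - a := by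
  have ha' : (a : ℝ) ≤ 0 := by exact_mod_cast ha
  have hab' : (a : ℝ) ≤ b := by exact_mod_cast hab
  have : max (-(b : ℝ)) 0 - -a ≤ 0 := sub_nonpos.2 (max_le (by linarith) (by linarith))
  simp only [lyap, smoothMax, max_eq_right ha', max_eq_left (neg_nonneg.mpr ha'),
    max_eq_left (sub_nonneg.mpr hab'), huber_of_nonpos this]
  ring

lemma lyap_of_nonpos_of_nonpos {a b : ℤ} (ha : a ≤ 0) (hb : b ≤ 0) :
    lyap δ (a, b) = δ / 4 * max ((b : ℝ) - a) 0 - a + huber (4 / δ) (a - b) := by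
  have ha' : (a : ℝ) ≤ 0 := by exact_mod_cast ha
  have hb' : (b : ℝ) ≤ 0 := by exact_mod_cast hb
  simp only [lyap, smoothMax, max_eq_right ha', max_eq_left (neg_nonneg.mpr ha'),
    max_eq_left (neg_nonneg.mpr hb')]
  ring_nf

lemma lyap_diag_add {a b : ℤ} (ha : 0 ≤ a) (hab : a ≤ b) :
    lyap δ (a, a) + δ / 4 * ((b : ℝ) - a) = lyap δ (a, b) := by
  have ha' : (0 : ℝ) ≤ a := by exact_mod_cast ha
  have hab' : (a : ℝ) ≤ b := by exact_mod_cast hab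
  rw [lyap_of_nonneg ha, lyap_of_nonneg ha, max_self, max_eq_right hab',
    max_eq_right (by linarith : -(a : ℝ) ≤ 0), max_eq_right (by linarith : -(b : ℝ) ≤ 0)]
  ring

lemma lyap_le_of_inRollbackRange (hδ : 0 < δ) {y z : ℤ × ℤ} (h : InRollbackRange y z) :
    lyap δ z ≤ lyap δ y := by
  obtain ⟨a, b⟩ := y
  rcases h with ⟨hab, rfl⟩ | ⟨ha, hz₁, hz₂, hz₃⟩
  · dsimp only at hab ⊢
    have hδba : 0 ≤ δ / 4 * ((b : ℝ) - a) :=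
      mul_nonneg (by positivity) (sub_nonneg.2 (by exact_mod_cast hab.le))
    rcases le_total a 0 with ha | ha
    · rw [lyap_of_nonpos_of_le ha le_rfl, lyap_of_nonpos_of_le ha hab.le]
      linarith
    · rw [← lyap_diag_add ha hab.le]
      linarith
  · obtain ⟨z₁, z₂⟩ := z
    dsimp only at ha hz₁ hz₂ hz₃ ⊢
    subst hz₁
    rw [lyap_of_nonneg le_rfl, lyap_of_nonneg ha.le]
    have h₁ : max ((0 : ℤ) : ℝ) z₂ ≤ max (a : ℝ) b :=
      max_le_max (by exact_mod_cast ha.le) (by exact_mod_cast hz₃)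
    have h₂ : max (-(z₂ : ℝ)) 0 ≤ max (-(b : ℝ)) 0 := by
      have : (min b 0 : ℝ) ≤ z₂ := by exact_mod_cast hz₂
      rcases le_total (b : ℝ) 0 with hb | hb
      · rw [min_eq_left hb] at this
        exact max_le_max (by linarith) le_rfl
      · rw [min_eq_right hb] at this
        rw [max_eq_right (by linarith)]
        exact le_max_right _ _
    have := huber_monotone (T := 4 / δ) (by positivity) h₂
    have := mul_le_mul_of_nonneg_left h₁ (by positivity : (0 : ℝ) ≤ δ / 4)
    linarith

lemma lyap_reset_add_le (hδ : 0 < δ) {a : ℤ} (ha : 0 ≤ a) (b : ℤ) :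
    lyap δ (0, min b 0) + δ / 4 * a ≤ lyap δ (a, b) := by
  rw [lyap_of_nonneg le_rfl, lyap_of_nonneg ha]
  have ha' := mul_le_mul_of_nonneg_left (le_max_left (a : ℝ) b) (by positivity : (0 : ℝ) ≤ δ / 4)
  rcases le_total b 0 with hb | hb
  · have hb' : (b : ℝ) ≤ 0 := by exact_mod_cast hb
    rw [min_eq_left hb, Int.cast_zero, max_eq_left hb']
    linarith
  · have := huber_nonneg (T := 4 / δ) (by positivity) (max (-(b : ℝ)) 0)
    rw [min_eq_right hb]
    simp only [Int.cast_zero, max_self, neg_zero, huber_of_nonpos le_rfl]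
    linarith

end lyap

/-- The standing assumptions: `q` plays the role of `b₂`, and `δ` bounds the drifts
`λ₂ - λ₁` and `λ₃ - λ₁` of the free dynamics from below. -/
structure Admissible (l1 l2 l3 b12 b23 q δ : ℝ) : Prop where
  l1_nonneg : 0 ≤ l1
  l2_nonneg : 0 ≤ l2
  l3_nonneg : 0 ≤ l3
  sum_le_one : l1 + l2 + l3 ≤ 1
  b12_nonneg : 0 ≤ b12
  b23_nonneg : 0 ≤ b23
  q_nonneg : 0 ≤ q
  q_le_one : q ≤ 1
  delta_pos : 0 < δ
  delta_le_l2 : δ ≤ l2 - l1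
  delta_le_l3 : δ ≤ l3 - l1

namespace Admissible

variable {l1 l2 l3 b12 b23 q δ : ℝ}

lemma delta_le_one (h : Admissible l1 l2 l3 b12 b23 q δ) : δ ≤ 1 := by
  linarith [h.delta_le_l2, h.l1_nonneg, h.l3_nonneg, h.sum_le_one]

lemma l2_add_l3_mul_le (h : Admissible l1 l2 l3 b12 b23 q δ) : (l2 + l3) * (δ / 4) ≤ δ / 4 :=
  mul_le_of_le_one_left (by linarith [h.delta_pos]) (by linarith [h.l1_nonneg, h.sum_le_one])

lemma rollbackDrift_lyap_le (h : Admissible l1 l2 l3 b12 b23 q δ) (y z₀ : ℤ × ℤ) :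
    rollbackDrift b12 b23 q (lyap δ) y ≤ rker b12 b23 q y z₀ * (lyap δ z₀ - lyap δ y) :=
  rollbackDrift_le h.b12_nonneg h.b23_nonneg h.q_nonneg h.q_le_one
    (fun _ hz => lyap_le_of_inRollbackRange h.delta_pos hz) z₀

lemma rollbackDrift_lyap_nonpos (h : Admissible l1 l2 l3 b12 b23 q δ) (y : ℤ × ℤ) :
    rollbackDrift b12 b23 q (lyap δ) y ≤ 0 := by
  simpa using h.rollbackDrift_lyap_le y y

lemma rollbackDrift_lyap_le_of_pos (h : Admissible l1 l2 l3 b12 b23 q δ) {a : ℤ} (ha : 0 < a)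
    (b : ℤ) : rollbackDrift b12 b23 q (lyap δ) (a, b) ≤ -(b12 * q * (δ / 4 * a)) := by
  have hF := lyap_reset_add_le h.delta_pos ha.le b
  have hpos : (0 : ℝ) ≤ δ / 4 * a :=
    mul_nonneg (by linarith [h.delta_pos]) (by exact_mod_cast ha.le)
  calc rollbackDrift b12 b23 q (lyap δ) (a, b)
      ≤ rker b12 b23 q (a, b) (0, min b 0) * (lyap δ (0, min b 0) - lyap δ (a, b)) :=
        h.rollbackDrift_lyap_le _ _
    _ ≤ b12 * q * (lyap δ (0, min b 0) - lyap δ (a, b)) :=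
        mul_le_mul_of_nonpos_right (le_rker_reset h.b12_nonneg h.b23_nonneg h.q_nonneg
          h.q_le_one (y := (a, b)) ha) (by linarith)
    _ ≤ -(b12 * q * (δ / 4 * a)) := by
        rw [← mul_neg]
        exact mul_le_mul_of_nonneg_left (by linarith) (mul_nonneg h.b12_nonneg h.q_nonneg)

lemma rollbackDrift_lyap_le_of_lt (h : Admissible l1 l2 l3 b12 b23 q δ) {a b : ℤ} (ha : 0 ≤ a)
    (hab : a < b) :
    rollbackDrift b12 b23 q (lyap δ) (a, b) ≤ -(b23 * (δ / 4 * ((b : ℝ) - a))) := by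
  have hF := lyap_diag_add (δ := δ) ha hab.le
  have hpos : (0 : ℝ) ≤ δ / 4 * ((b : ℝ) - a) :=
    mul_nonneg (by linarith [h.delta_pos]) (sub_nonneg.2 (by exact_mod_cast hab.le))
  calc rollbackDrift b12 b23 q (lyap δ) (a, b)
      ≤ rker b12 b23 q (a, b) (a, a) * (lyap δ (a, a) - lyap δ (a, b)) :=
        h.rollbackDrift_lyap_le _ _
    _ ≤ b23 * (lyap δ (a, a) - lyap δ (a, b)) :=
        mul_le_mul_of_nonpos_right (le_rker_diag h.b12_nonneg h.q_nonneg h.q_le_one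
          (y := (a, b)) hab) (by linarith)
    _ = -(b23 * (δ / 4 * ((b : ℝ) - a))) := by rw [← hF]; ring

lemma freeDrift_lyap_le (h : Admissible l1 l2 l3 b12 b23 q δ) (y : ℤ × ℤ) :
    freeDrift l1 l2 l3 (lyap δ) y ≤ 1 := by
  obtain ⟨a, b⟩ := y
  have h₁ := lyap_right_sub_le h.delta_pos a b
  have h₂ := lyap_up_sub_le h.delta_pos a b
  have h₃ := lyap_diag_sub_le h.delta_pos a b
  have hδ := h.delta_le_one
  have := mul_le_mul_of_nonneg_left (h₁.trans (by linarith : δ / 4 ≤ 1)) h.l2_nonneg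
  have := mul_le_mul_of_nonneg_left (h₂.trans (by linarith : δ / 4 ≤ 1)) h.l3_nonneg
  have := mul_le_mul_of_nonneg_left h₃ h.l1_nonneg
  unfold freeDrift
  linarith [h.sum_le_one]

lemma drift_lyap_le_of_neg_of_le (h : Admissible l1 l2 l3 b12 b23 q δ) {a b : ℤ} (ha : a ≤ -1)
    (hba : b ≤ a) : drift l1 l2 l3 b12 b23 q (lyap δ) (a, b) ≤ -(δ / 2) := by
  have hT : 0 < 4 / δ := div_pos four_pos h.delta_pos
  have hba' : (b : ℝ) ≤ a := by exact_mod_cast hba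
  set t : ℝ := a - b
  set d := huber (4 / δ) t - huber (4 / δ) (t - 1)
  have e₀ : lyap δ (a, b) = -a + huber (4 / δ) t := by
    rw [lyap_of_nonpos_of_nonpos (by omega) (by omega), max_eq_right (by linarith)]; ring
  have e₁ : lyap δ (a + 1, b) = -a - 1 + huber (4 / δ) (t + 1) := by
    rw [lyap_of_nonpos_of_nonpos (by omega) (by omega)]
    push_cast
    rw [max_eq_right (by linarith), show (a : ℝ) + 1 - b = t + 1 by ring]
    ring
  have e₂ : lyap δ (a, b + 1) ≤ δ / 4 - a + huber (4 / δ) (t - 1) := by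
    rw [lyap_of_nonpos_of_nonpos (by omega) (by omega)]
    push_cast
    have := mul_le_mul_of_nonneg_left (max_le (by linarith) zero_le_one :
      max ((b : ℝ) + 1 - a) 0 ≤ 1) (by linarith [h.delta_pos] : 0 ≤ δ / 4)
    rw [show (a : ℝ) - (b + 1) = t - 1 by ring]
    linarith
  have hu : huber (4 / δ) (t + 1) - huber (4 / δ) t ≤ d + δ / 4 := by
    have := huber_add_one_add_huber_sub_one_le hT t
    rw [one_div_div] at this
    linarith
  have hd₀ : 0 ≤ d := sub_nonneg.2 (huber_monotone hT (by linarith))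
  have hd₁ : d ≤ 1 := by
    have := huber_le_add hT (t - 1) t
    rw [sub_sub_cancel, max_eq_left zero_le_one] at this
    linarith
  have hD := drift_le h.l1_nonneg h.l2_nonneg h.l3_nonneg (u₁ := -1 + d + δ / 4)
    (u₂ := δ / 4 - d) (by rw [e₁, e₀]; linarith) (by rw [e₀]; linarith)
    (lyap_diag_sub_le h.delta_pos a b) (h.rollbackDrift_lyap_nonpos (a, b))
  have hδ := h.l2_add_l3_mul_le
  rcases le_total l2 l3 with hl | hl
  · linarith [mul_nonneg (sub_nonneg.2 hl) hd₀, h.delta_le_l2, h.delta_pos]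
  · linarith [mul_le_mul_of_nonneg_left hd₁ (sub_nonneg.2 hl), h.delta_le_l3, h.delta_pos]

lemma drift_lyap_le_of_neg_of_lt (h : Admissible l1 l2 l3 b12 b23 q δ) {a b : ℤ} (ha : a ≤ -1)
    (hab : a < b) : drift l1 l2 l3 b12 b23 q (lyap δ) (a, b) ≤ -(δ / 2) := by
  have e₁ : lyap δ (a + 1, b) - lyap δ (a, b) = -(δ / 4) - 1 := by
    rw [lyap_of_nonpos_of_le (by omega) (by omega), lyap_of_nonpos_of_le (by omega) hab.le]
    push_cast
    ring
  have hD := drift_le h.l1_nonneg h.l2_nonneg h.l3_nonneg e₁.le (lyap_up_sub_le h.delta_pos a b)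
    (lyap_diag_sub_le h.delta_pos a b) (h.rollbackDrift_lyap_nonpos (a, b))
  linarith [h.l2_add_l3_mul_le, h.delta_le_l2, mul_nonneg h.l2_nonneg h.delta_pos.le, h.delta_pos]

lemma drift_lyap_le_of_pos (h : Admissible l1 l2 l3 b12 b23 q δ) {a : ℤ} (ha : 0 < a) (b : ℤ)
    (hbig : 2 ≤ b12 * q * (δ / 4 * a)) :
    drift l1 l2 l3 b12 b23 q (lyap δ) (a, b) ≤ -(δ / 2) := by
  have := h.freeDrift_lyap_le (a, b)
  have := h.rollbackDrift_lyap_le_of_pos ha b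
  unfold drift
  linarith [h.delta_le_one]

lemma drift_lyap_le_of_nonneg_of_gap (h : Admissible l1 l2 l3 b12 b23 q δ) {a b : ℤ} (ha : 0 ≤ a)
    (hbig : 2 ≤ b23 * (δ / 4 * ((b : ℝ) - a))) :
    drift l1 l2 l3 b12 b23 q (lyap δ) (a, b) ≤ -(δ / 2) := by
  have hab : a < b := by
    by_contra! hba
    have : (b : ℝ) - a ≤ 0 := sub_nonpos.2 (by exact_mod_cast hba)
    nlinarith [mul_nonneg h.b23_nonneg h.delta_pos.le]
  have := h.freeDrift_lyap_le (a, b)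
  have := h.rollbackDrift_lyap_le_of_lt ha hab
  unfold drift
  linarith [h.delta_le_one]

lemma drift_lyap_le_of_nonneg_of_le_neg (h : Admissible l1 l2 l3 b12 b23 q δ) {a b : ℤ}
    (ha : 0 ≤ a) (hb : 4 / δ + 1 ≤ -(b : ℝ)) :
    drift l1 l2 l3 b12 b23 q (lyap δ) (a, b) ≤ -(δ / 2) := by
  have hT : 0 < 4 / δ := div_pos four_pos h.delta_pos
  have ha' : (0 : ℝ) ≤ a := by exact_mod_cast ha
  have e₂ : lyap δ (a, b + 1) - lyap δ (a, b) = -1 := by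
    rw [lyap_of_nonneg ha, lyap_of_nonneg ha]
    push_cast
    rw [max_eq_left (by linarith), max_eq_left (by linarith), max_eq_left (by linarith),
      max_eq_left (by linarith), huber_of_le hT (by linarith), huber_of_le hT (by linarith)]
    ring
  have hD := drift_le h.l1_nonneg h.l2_nonneg h.l3_nonneg (lyap_right_sub_le h.delta_pos a b)
    e₂.le (lyap_diag_sub_le h.delta_pos a b) (h.rollbackDrift_lyap_nonpos (a, b))
  linarith [h.l2_add_l3_mul_le, h.delta_le_l3, mul_nonneg h.l3_nonneg h.delta_pos.le, h.delta_pos]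

lemma drift_lyap_le_of_not_mem_box (h : Admissible l1 l2 l3 b12 b23 q δ)
    (hb12q : 0 < b12 * q) (hb23 : 0 < b23) {N : ℤ}
    (hN : 2 / (b12 * q * (δ / 4)) + 2 / (b23 * (δ / 4)) + 4 / δ + 1 ≤ N)
    {a b : ℤ} (hout : (a, b) ∉ Finset.Icc (-N, -N) (N, N)) :
    drift l1 l2 l3 b12 b23 q (lyap δ) (a, b) ≤ -(δ / 2) := by
  have hδ := h.delta_pos
  have hA : 0 < 2 / (b12 * q * (δ / 4)) := by positivity
  have hG : 0 < 2 / (b23 * (δ / 4)) := by positivity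
  have hT : 0 < 4 / δ := by positivity
  simp only [Finset.mem_Icc, Prod.mk_le_mk, not_and_or, not_le] at hout
  rcases le_or_gt a (-1) with ha | ha
  · rcases le_or_gt b a with hba | hab
    · exact h.drift_lyap_le_of_neg_of_le ha hba
    · exact h.drift_lyap_le_of_neg_of_lt ha hab
  have ha₀ : 0 ≤ a := by omega
  by_cases hlarge : 2 / (b12 * q * (δ / 4)) ≤ a
  · refine h.drift_lyap_le_of_pos (by exact_mod_cast hA.trans_le hlarge) b ?_
    rw [div_le_iff₀ (by positivity)] at hlarge
    linarith
  have haN : a ≤ N := by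
    have : (a : ℝ) ≤ N := by linarith
    exact_mod_cast this
  rcases (by omega : b ≤ -N - 1 ∨ N + 1 ≤ b) with hb | hb
  · refine h.drift_lyap_le_of_nonneg_of_le_neg ha₀ ?_
    have : (b : ℝ) ≤ -N - 1 := by exact_mod_cast hb
    linarith
  · refine h.drift_lyap_le_of_nonneg_of_gap ha₀ ?_
    have : (N : ℝ) + 1 ≤ b := by exact_mod_cast hb
    have hgap : 2 / (b23 * (δ / 4)) ≤ b - a := by linarith
    rw [div_le_iff₀ (by positivity)] at hgap
    linarith

end Admissible

end Cascade

/-- Foster–Lyapunov criterion holds: if `λ₁ < λ₂` and `λ₁ < λ₃`, then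
there are a nonnegative function `f : ℤ² → ℝ`, a constant `ε > 0` and a finite set
`A ⊆ ℤ²` with `Σ_z p_{yz} f(z) − f(y) < −ε` for every `y ∉ A`, and
`Σ_z p_{yz} f(z) < ∞` for every `y ∈ A`. -/
theorem stmt15 (l1 l2 l3 b12 b23 : ℝ)
    (hl1 : 0 < l1) (hl2 : 0 < l2) (hl3 : 0 < l3) (hb12 : 0 < b12) (hb23 : 0 < b23)
    (hsum : l1 + l2 + l3 + b12 + b23 = 1) (h12 : l1 < l2) (h13 : l1 < l3) :
    ∃ f : ℤ × ℤ → ℝ, (∀ y, 0 ≤ f y) ∧ ∃ ε > (0 : ℝ), ∃ A : Finset (ℤ × ℤ),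
      (∀ y : ℤ × ℤ, y ∉ A →
        Summable (fun z : ℤ × ℤ => pker l1 l2 l3 b12 b23 (l2 / (l2 + b12)) y z * f z) ∧
        (∑' z : ℤ × ℤ, pker l1 l2 l3 b12 b23 (l2 / (l2 + b12)) y z * f z) - f y < -ε) ∧
      (∀ y ∈ A,
        Summable (fun z : ℤ × ℤ => pker l1 l2 l3 b12 b23 (l2 / (l2 + b12)) y z * f z)) := by
  set q := l2 / (l2 + b12)
  set δ := min (l2 - l1) (l3 - l1)
  have hq0 : 0 < q := div_pos hl2 (by linarith)
  have h : Cascade.Admissible l1 l2 l3 b12 b23 q δ :=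
    ⟨hl1.le, hl2.le, hl3.le, by linarith, hb12.le, hb23.le, hq0.le,
      (div_le_one (by linarith)).2 (by linarith), lt_min (by linarith) (by linarith),
      min_le_left _ _, min_le_right _ _⟩
  obtain ⟨N, hN⟩ : ∃ N : ℤ, 2 / (b12 * q * (δ / 4)) + 2 / (b23 * (δ / 4)) + 4 / δ + 1 ≤ N :=
    ⟨_, Int.le_ceil _⟩
  refine ⟨Cascade.lyap δ, Cascade.lyap_nonneg h.delta_pos, δ / 4, by linarith [h.delta_pos],
    Finset.Icc (-N, -N) (N, N), fun ⟨a, b⟩ hy => ?_,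
    fun y _ => (Cascade.hasSum_pker_mul l1 l2 l3 b12 b23 q _ y).summable⟩
  have hs := Cascade.hasSum_pker_mul l1 l2 l3 b12 b23 q (Cascade.lyap δ) (a, b)
  have := h.drift_lyap_le_of_not_mem_box (mul_pos hb12 hq0) hb23 hN hy
  exact ⟨hs.summable, by rw [hs.tsum_eq]; linarith [h.delta_pos]⟩
end
end

section
/- Assume λ₁<λ₂ and λ₁<λ₃. Then the embedded relative-coordinate Markov chain of the three-processor cascade model admits an invariant probability distribution, i.e. there exists a probability mass function π on ℤ² such that Σ_y π(y)·p_{yz} = π(z) for every z∈ℤ². -/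
noncomputable section

namespace Stmt16

/-- box of radius n -/
def box (n : ℕ) : Finset (ℤ × ℤ) :=
  Finset.Icc (-(n : ℤ)) (n : ℤ) ×ˢ Finset.Icc (-(n : ℤ)) (n : ℤ)

lemma mem_box {n : ℕ} {z : ℤ × ℤ} : z ∈ box n ↔ z.1.natAbs ≤ n ∧ z.2.natAbs ≤ n := by
  simp only [box, Finset.mem_product, Finset.mem_Icc]
  omega

def Nrad (y : ℤ × ℤ) : ℕ := max y.1.natAbs y.2.natAbs + 1

def BB (y : ℤ × ℤ) : Finset (ℤ × ℤ) := box (Nrad y)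

lemma self_mem_BB (y : ℤ × ℤ) : y ∈ BB y := by
  simp only [BB, mem_box, Nrad]; omega

lemma sum_point (s : Finset (ℤ × ℤ)) (c : ℤ × ℤ) (hc : c ∈ s) (v : ℝ) (g : ℤ × ℤ → ℝ) :
    ∑ z ∈ s, (if z = c then v else 0) * g z = v * g c := by
  have : ∀ z ∈ s, (if z = c then v else 0) * g z = if z = c then v * g z else 0 := by
    intro z _; rw [ite_mul, zero_mul]
  rw [Finset.sum_congr rfl this, Finset.sum_ite_eq' s c (fun z => v * g z), if_pos hc]

lemma sum_strip (m : ℕ) (n : ℕ) (hn : n ≤ m) (w : ℕ → ℝ) :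
    ∑ z ∈ box m, (if z.1 = 0 ∧ 0 ≤ z.2 ∧ z.2 < (n : ℤ) then w z.2.toNat else 0)
      = ∑ k ∈ Finset.range n, w k := by
  induction n with
  | zero =>
    rw [Finset.range_zero, Finset.sum_empty]
    refine Finset.sum_eq_zero (fun z _ => if_neg ?_)
    rintro ⟨-, h1, h2⟩; omega
  | succ n ih =>
    have hn' : n ≤ m := by omega
    have hsplit : ∀ z : ℤ × ℤ,
        (if z.1 = 0 ∧ 0 ≤ z.2 ∧ z.2 < ((n+1 : ℕ) : ℤ) then w z.2.toNat else 0)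
        = (if z.1 = 0 ∧ 0 ≤ z.2 ∧ z.2 < (n : ℤ) then w z.2.toNat else 0)
          + (if z = ((0 : ℤ), (n : ℤ)) then w n else 0) := by
      intro z
      rcases z with ⟨z1, z2⟩
      by_cases h1 : z1 = 0 ∧ 0 ≤ z2 ∧ z2 < (n : ℤ)
      · rw [if_pos h1, if_pos ⟨h1.1, h1.2.1, by push_cast; omega⟩,
          if_neg (by rintro h; injection h with e1 e2; omega), add_zero]
      · by_cases h2 : (⟨z1, z2⟩ : ℤ × ℤ) = ((0 : ℤ), (n : ℤ))
        · injection h2 with e1 e2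
          subst e1; subst e2
          rw [if_pos ⟨rfl, by omega, by push_cast; omega⟩, if_neg (by omega),
            if_pos rfl, zero_add]
          simp
        · rw [if_neg h1, if_neg h2, add_zero, if_neg]
          rintro ⟨e1, e2, e3⟩
          simp only at e1 e2 e3
          apply h2
          have : z2 = (n : ℤ) := by push_cast at e3; omega
          rw [e1, this]
    rw [Finset.sum_congr rfl (fun z _ => hsplit z), Finset.sum_add_distrib, ih hn',
      Finset.sum_ite_eq' (box m) ((0 : ℤ), (n : ℤ)) (fun _ => w n),
      if_pos (by rw [mem_box]; simp; omega), Finset.sum_range_succ]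

-- strip sum with a g-factor
lemma sum_strip_mul (m : ℕ) (n : ℕ) (hn : n ≤ m) (v : ℕ → ℝ) (g : ℤ × ℤ → ℝ) :
    ∑ z ∈ box m, (if z.1 = 0 ∧ 0 ≤ z.2 ∧ z.2 < (n : ℤ) then v z.2.toNat else 0) * g z
      = ∑ k ∈ Finset.range n, v k * g ((0 : ℤ), (k : ℤ)) := by
  have hpt : ∀ z ∈ box m, (if z.1 = 0 ∧ 0 ≤ z.2 ∧ z.2 < (n : ℤ) then v z.2.toNat else 0) * g z
      = (if z.1 = 0 ∧ 0 ≤ z.2 ∧ z.2 < (n : ℤ) then (fun k => v k * g ((0:ℤ), (k:ℤ))) z.2.toNat else 0) := by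
    intro z _
    rw [ite_mul, zero_mul]
    by_cases h : z.1 = 0 ∧ 0 ≤ z.2 ∧ z.2 < (n : ℤ)
    · rw [if_pos h, if_pos h]
      have hz : z = ((0:ℤ), ((z.2.toNat : ℤ))) := by
        rcases z with ⟨z1, z2⟩
        simp only at h ⊢
        exact Prod.ext h.1 (by omega)
      beta_reduce
      rw [← hz]
    · rw [if_neg h, if_neg h]
  rw [Finset.sum_congr rfl hpt, sum_strip m n hn (fun k => v k * g ((0:ℤ),(k:ℤ)))]


section Kernel

variable (l1 l2 l3 b12 b23 b2 : ℝ)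

lemma supp_sr {y : ℤ × ℤ} {z : ℤ × ℤ} (hz : z ∉ BB y) :
    sker l1 l2 l3 y z + rker b12 b23 b2 y z = 0 := by
  rw [BB, mem_box] at hz
  simp only [sker, rker]
  have h1 : ¬ z = y + (1, 0) := by
    rintro rfl; exact hz (by simp [Nrad, Prod.fst_add, Prod.snd_add]; omega)
  have h2 : ¬ z = y + (0, 1) := by
    rintro rfl; exact hz (by simp [Nrad, Prod.fst_add, Prod.snd_add]; omega)
  have h3 : ¬ z = y - (1, 1) := by
    rintro rfl; exact hz (by simp [Nrad, Prod.fst_sub, Prod.snd_sub]; omega)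
  have h4 : ¬ (0 < y.1 ∧ y.2 ≤ 0 ∧ z = (0, y.2)) := by
    rintro ⟨-, -, rfl⟩; exact hz (by simp [Nrad]; omega)
  have h5 : ¬ (y.1 < y.2 ∧ z = (y.1, y.1)) := by
    rintro ⟨-, rfl⟩; exact hz (by simp [Nrad]; omega)
  have h6 : ¬ (0 < y.2 ∧ y.2 ≤ y.1 ∧ z.1 = 0 ∧ 0 ≤ z.2 ∧ z.2 < y.2) := by
    rintro ⟨h1', h2', h3', h4', h5'⟩
    exact hz (by simp only [mem_box, Nrad]; omega)
  have h7 : ¬ (0 < y.2 ∧ y.2 ≤ y.1 ∧ z = (0, y.2)) := by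
    rintro ⟨-, -, rfl⟩; exact hz (by simp [Nrad]; omega)
  have h8 : ¬ (0 < y.1 ∧ y.1 < y.2 ∧ z.1 = 0 ∧ 0 ≤ z.2 ∧ z.2 ≤ y.1) := by
    rintro ⟨h1', h2', h3', h4', h5'⟩
    exact hz (by simp only [mem_box, Nrad]; omega)
  have h9 : ¬ (0 < y.1 ∧ y.1 < y.2 ∧ z = (0, y.2)) := by
    rintro ⟨-, -, rfl⟩; exact hz (by simp [Nrad]; omega)
  rw [if_neg h1, if_neg h2, if_neg h3, if_neg h4, if_neg h5, if_neg h6, if_neg h7,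
    if_neg h8, if_neg h9]
  ring

lemma summable_sr (y : ℤ × ℤ) :
    Summable (fun z => sker l1 l2 l3 y z + rker b12 b23 b2 y z) :=
  summable_of_ne_finset_zero (s := BB y)
    (fun _ hz => supp_sr l1 l2 l3 b12 b23 b2 hz)

/-- the total outflow mass -/
def Tv (y : ℤ × ℤ) : ℝ := ∑ z ∈ BB y, (sker l1 l2 l3 y z + rker b12 b23 b2 y z)

lemma tsum_sr (y : ℤ × ℤ) :
    ∑' z : ℤ × ℤ, (sker l1 l2 l3 y z + rker b12 b23 b2 y z) = Tv l1 l2 l3 b12 b23 b2 y :=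
  tsum_eq_sum (fun _ hz => supp_sr l1 l2 l3 b12 b23 b2 hz)

lemma pker_eq (y z : ℤ × ℤ) :
    pker l1 l2 l3 b12 b23 b2 y z = sker l1 l2 l3 y z + rker b12 b23 b2 y z +
      (if z = y then 1 - Tv l1 l2 l3 b12 b23 b2 y else 0) := by
  rw [pker, tsum_sr]

lemma supp_pker {y z : ℤ × ℤ} (hz : z ∉ BB y) : pker l1 l2 l3 b12 b23 b2 y z = 0 := by
  rw [pker_eq, supp_sr l1 l2 l3 b12 b23 b2 hz,
    if_neg (fun h => hz (by rw [h]; exact self_mem_BB y)), add_zero]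

lemma key_eval (a b : ℤ) (g : ℤ × ℤ → ℝ) :
    ∑ z ∈ BB (a, b), (sker l1 l2 l3 (a, b) z + rker b12 b23 b2 (a, b) z) * g z
    = l2 * g (a + 1, b) + l3 * g (a, b + 1) + l1 * g (a - 1, b - 1)
      + (if 0 < a ∧ b ≤ 0 then b12 * g (0, b) else 0)
      + (if a < b then b23 * g (a, a) else 0)
      + (if 0 < b ∧ b ≤ a then
          (∑ k ∈ Finset.range b.toNat, b12 * (1 - b2) ^ k * b2 * g ((0 : ℤ), (k : ℤ)))
            + b12 * (1 - b2) ^ b.toNat * g (0, b) else 0)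
      + (if 0 < a ∧ a < b then
          (∑ k ∈ Finset.range (a.toNat + 1), b12 * (1 - b2) ^ k * b2 * g ((0 : ℤ), (k : ℤ)))
            + b12 * (1 - b2) ^ (a.toNat + 1) * g (0, b) else 0) := by
  have hm : ∀ z ∈ BB (a, b), (sker l1 l2 l3 (a, b) z + rker b12 b23 b2 (a, b) z) * g z
      = (if z = (a + 1, b) then l2 else 0) * g z
        + (if z = (a, b + 1) then l3 else 0) * g z
        + (if z = (a - 1, b - 1) then l1 else 0) * g z
        + (if 0 < a ∧ b ≤ 0 ∧ z = (0, b) then b12 else 0) * g z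
        + (if a < b ∧ z = (a, a) then b23 else 0) * g z
        + (if 0 < b ∧ b ≤ a ∧ z.1 = 0 ∧ 0 ≤ z.2 ∧ z.2 < b then
            b12 * (1 - b2) ^ z.2.toNat * b2 else 0) * g z
        + (if 0 < b ∧ b ≤ a ∧ z = (0, b) then b12 * (1 - b2) ^ b.toNat else 0) * g z
        + (if 0 < a ∧ a < b ∧ z.1 = 0 ∧ 0 ≤ z.2 ∧ z.2 ≤ a then
            b12 * (1 - b2) ^ z.2.toNat * b2 else 0) * g z
        + (if 0 < a ∧ a < b ∧ z = (0, b) then b12 * (1 - b2) ^ (a.toNat + 1) else 0) * g z := by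
    intro z _
    simp only [sker, rker]
    have e1 : (a, b) + ((1 : ℤ), (0 : ℤ)) = (a + 1, b) := by
      simp [Prod.ext_iff]
    have e2 : (a, b) + ((0 : ℤ), (1 : ℤ)) = (a, b + 1) := by
      simp [Prod.ext_iff]
    have e3 : (a, b) - ((1 : ℤ), (1 : ℤ)) = (a - 1, b - 1) := by
      simp [Prod.ext_iff]
    rw [e1, e2, e3]
    ring
  rw [Finset.sum_congr rfl hm]
  simp only [Finset.sum_add_distrib]
  have m1 : (a + 1, b) ∈ BB (a, b) := by simp only [BB, mem_box, Nrad]; omega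
  have m2 : (a, b + 1) ∈ BB (a, b) := by simp only [BB, mem_box, Nrad]; omega
  have m3 : (a - 1, b - 1) ∈ BB (a, b) := by simp only [BB, mem_box, Nrad]; omega
  have m4 : ((0 : ℤ), b) ∈ BB (a, b) := by simp only [BB, mem_box, Nrad]; omega
  have m5 : (a, a) ∈ BB (a, b) := by simp only [BB, mem_box, Nrad]; omega
  rw [sum_point _ _ m1 l2 g, sum_point _ _ m2 l3 g, sum_point _ _ m3 l1 g]
  -- term 4
  have t4 : ∑ z ∈ BB (a, b), (if 0 < a ∧ b ≤ 0 ∧ z = (0, b) then b12 else 0) * g z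
      = (if 0 < a ∧ b ≤ 0 then b12 * g (0, b) else 0) := by
    by_cases hc : 0 < a ∧ b ≤ 0
    · rw [if_pos hc]
      simp only [hc.1, hc.2, true_and]
      exact sum_point _ _ m4 b12 g
    · rw [if_neg hc, Finset.sum_eq_zero]
      intro z _
      rw [if_neg (fun h => hc ⟨h.1, h.2.1⟩), zero_mul]
  -- term 5
  have t5 : ∑ z ∈ BB (a, b), (if a < b ∧ z = (a, a) then b23 else 0) * g z
      = (if a < b then b23 * g (a, a) else 0) := by
    by_cases hc : a < b
    · rw [if_pos hc]
      simp only [hc, true_and]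
      exact sum_point _ _ m5 b23 g
    · rw [if_neg hc, Finset.sum_eq_zero]
      intro z _
      rw [if_neg (fun h => hc h.1), zero_mul]
  -- term 6 (strip, 0 < b ≤ a)
  have t6 : ∑ z ∈ BB (a, b), (if 0 < b ∧ b ≤ a ∧ z.1 = 0 ∧ 0 ≤ z.2 ∧ z.2 < b then
        b12 * (1 - b2) ^ z.2.toNat * b2 else 0) * g z
      = (if 0 < b ∧ b ≤ a then
          ∑ k ∈ Finset.range b.toNat, b12 * (1 - b2) ^ k * b2 * g ((0 : ℤ), (k : ℤ)) else 0) := by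
    by_cases hc : 0 < b ∧ b ≤ a
    · rw [if_pos hc]
      simp only [hc.1, hc.2, true_and]
      have hcast : ∀ z : ℤ × ℤ, (z.1 = 0 ∧ 0 ≤ z.2 ∧ z.2 < b) ↔
          (z.1 = 0 ∧ 0 ≤ z.2 ∧ z.2 < ((b.toNat : ℕ) : ℤ)) := by
        intro z; constructor <;> (rintro ⟨h1, h2, h3⟩; exact ⟨h1, h2, by omega⟩)
      simp only [hcast]
      exact sum_strip_mul (Nrad (a, b)) b.toNat (by simp only [Nrad]; omega)
        (fun k => b12 * (1 - b2) ^ k * b2) g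
    · rw [if_neg hc, Finset.sum_eq_zero]
      intro z _
      rw [if_neg (fun h => hc ⟨h.1, h.2.1⟩), zero_mul]
  -- term 7
  have t7 : ∑ z ∈ BB (a, b), (if 0 < b ∧ b ≤ a ∧ z = (0, b) then
        b12 * (1 - b2) ^ b.toNat else 0) * g z
      = (if 0 < b ∧ b ≤ a then b12 * (1 - b2) ^ b.toNat * g (0, b) else 0) := by
    by_cases hc : 0 < b ∧ b ≤ a
    · rw [if_pos hc]
      simp only [hc.1, hc.2, true_and]
      exact sum_point _ _ m4 _ g
    · rw [if_neg hc, Finset.sum_eq_zero]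
      intro z _
      rw [if_neg (fun h => hc ⟨h.1, h.2.1⟩), zero_mul]
  -- term 8 (strip, 0 < a < b)
  have t8 : ∑ z ∈ BB (a, b), (if 0 < a ∧ a < b ∧ z.1 = 0 ∧ 0 ≤ z.2 ∧ z.2 ≤ a then
        b12 * (1 - b2) ^ z.2.toNat * b2 else 0) * g z
      = (if 0 < a ∧ a < b then
          ∑ k ∈ Finset.range (a.toNat + 1), b12 * (1 - b2) ^ k * b2 * g ((0 : ℤ), (k : ℤ))
        else 0) := by
    by_cases hc : 0 < a ∧ a < b
    · rw [if_pos hc]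
      simp only [hc.1, hc.2, true_and]
      have hcast : ∀ z : ℤ × ℤ, (z.1 = 0 ∧ 0 ≤ z.2 ∧ z.2 ≤ a) ↔
          (z.1 = 0 ∧ 0 ≤ z.2 ∧ z.2 < (((a.toNat + 1 : ℕ)) : ℤ)) := by
        intro z; constructor <;> (rintro ⟨h1, h2, h3⟩; exact ⟨h1, h2, by omega⟩)
      simp only [hcast]
      exact sum_strip_mul (Nrad (a, b)) (a.toNat + 1) (by simp only [Nrad]; omega)
        (fun k => b12 * (1 - b2) ^ k * b2) g
    · rw [if_neg hc, Finset.sum_eq_zero]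
      intro z _
      rw [if_neg (fun h => hc ⟨h.1, h.2.1⟩), zero_mul]
  -- term 9
  have t9 : ∑ z ∈ BB (a, b), (if 0 < a ∧ a < b ∧ z = (0, b) then
        b12 * (1 - b2) ^ (a.toNat + 1) else 0) * g z
      = (if 0 < a ∧ a < b then b12 * (1 - b2) ^ (a.toNat + 1) * g (0, b) else 0) := by
    by_cases hc : 0 < a ∧ a < b
    · rw [if_pos hc]
      simp only [hc.1, hc.2, true_and]
      exact sum_point _ _ m4 _ g
    · rw [if_neg hc, Finset.sum_eq_zero]
      intro z _
      rw [if_neg (fun h => hc ⟨h.1, h.2.1⟩), zero_mul]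
  rw [t4, t5, t6, t7, t8, t9]
  split_ifs <;> ring

lemma geom_id (q c : ℝ) (h : c = 1 - q) (n : ℕ) :
    (∑ k ∈ Finset.range n, q ^ k) * c = 1 - q ^ n := by
  induction n with
  | zero => simp
  | succ n ih =>
    rw [Finset.sum_range_succ, add_mul, ih, pow_succ]
    rw [h]; ring

lemma group_mass (n : ℕ) :
    (∑ k ∈ Finset.range n, b12 * (1 - b2) ^ k * b2) + b12 * (1 - b2) ^ n = b12 := by
  have h1 : ∑ k ∈ Finset.range n, b12 * (1 - b2) ^ k * b2
      = b12 * ((∑ k ∈ Finset.range n, (1 - b2) ^ k) * b2) := by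
    rw [Finset.sum_mul, Finset.mul_sum]
    exact Finset.sum_congr rfl (fun k _ => by ring)
  rw [h1, geom_id (1 - b2) b2 (by ring) n]
  ring

lemma Tv_eq (a b : ℤ) : Tv l1 l2 l3 b12 b23 b2 (a, b)
    = l1 + l2 + l3 + (if 0 < a ∧ b ≤ 0 then b12 else 0) + (if a < b then b23 else 0)
      + (if 0 < b ∧ b ≤ a then b12 else 0) + (if 0 < a ∧ a < b then b12 else 0) := by
  have := key_eval l1 l2 l3 b12 b23 b2 a b (fun _ => 1)
  simp only [mul_one] at this
  rw [Tv, this, group_mass b12 b2 b.toNat, group_mass b12 b2 (a.toNat + 1)]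
  ring

variable {l1 l2 l3 b12 b23 b2}

/-- hypothesis bundle -/
structure Ctx (l1 l2 l3 b12 b23 b2 : ℝ) : Prop where
  hl1 : 0 < l1
  hl2 : 0 < l2
  hl3 : 0 < l3
  hb12 : 0 < b12
  hb23 : 0 < b23
  hsum : l1 + l2 + l3 + b12 + b23 = 1
  h12 : l1 < l2
  h13 : l1 < l3
  hb2 : 0 < b2
  hb2' : b2 < 1

lemma Tv_le_one (hc : Ctx l1 l2 l3 b12 b23 b2) (a b : ℤ) :
    Tv l1 l2 l3 b12 b23 b2 (a, b) ≤ 1 := by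
  rw [Tv_eq]
  have := hc.hsum
  have := hc.hb12.le
  have := hc.hb23.le
  split_ifs <;> first | (exfalso; omega) | linarith

lemma sr_nonneg (hc : Ctx l1 l2 l3 b12 b23 b2) (y z : ℤ × ℤ) :
    0 ≤ sker l1 l2 l3 y z + rker b12 b23 b2 y z := by
  have h1 : (0:ℝ) ≤ 1 - b2 := by linarith [hc.hb2']
  have h2 : ∀ n : ℕ, (0:ℝ) ≤ b12 * (1 - b2) ^ n * b2 :=
    fun n => mul_nonneg (mul_nonneg hc.hb12.le (pow_nonneg h1 n)) hc.hb2.le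
  have h3 : ∀ n : ℕ, (0:ℝ) ≤ b12 * (1 - b2) ^ n :=
    fun n => mul_nonneg hc.hb12.le (pow_nonneg h1 n)
  unfold sker rker
  have := hc.hl1.le; have := hc.hl2.le; have := hc.hl3.le
  have := hc.hb12.le; have := hc.hb23.le
  repeat' apply add_nonneg
  all_goals split_ifs <;> first | assumption | exact h2 _ | exact h3 _ | exact le_refl (0:ℝ)
  
lemma sr_self (y : ℤ × ℤ) : sker l1 l2 l3 y y + rker b12 b23 b2 y y = 0 := by
  rcases y with ⟨a, b⟩
  unfold sker rker
  rw [if_neg, if_neg, if_neg, if_neg, if_neg, if_neg, if_neg, if_neg, if_neg]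
  · ring
  all_goals simp only [Prod.ext_iff, Prod.fst_add, Prod.snd_add, Prod.fst_sub,
    Prod.snd_sub, not_and] <;> intros <;> omega

lemma pker_nonneg (hc : Ctx l1 l2 l3 b12 b23 b2) (y z : ℤ × ℤ) :
    0 ≤ pker l1 l2 l3 b12 b23 b2 y z := by
  rw [pker_eq]
  by_cases h : z = y
  · subst h
    rw [if_pos rfl, sr_self, zero_add]
    rcases z with ⟨a, b⟩
    linarith [Tv_le_one hc a b]
  · rw [if_neg h, add_zero]
    exact sr_nonneg hc y z

lemma sum_pker_BB (y : ℤ × ℤ) : ∑ z ∈ BB y, pker l1 l2 l3 b12 b23 b2 y z = 1 := by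
  have : ∀ z ∈ BB y, pker l1 l2 l3 b12 b23 b2 y z
      = (sker l1 l2 l3 y z + rker b12 b23 b2 y z)
        + (if z = y then 1 - Tv l1 l2 l3 b12 b23 b2 y else 0) :=
    fun z _ => pker_eq l1 l2 l3 b12 b23 b2 y z
  rw [Finset.sum_congr rfl this, Finset.sum_add_distrib,
    Finset.sum_ite_eq' (BB y) y (fun _ => 1 - Tv l1 l2 l3 b12 b23 b2 y),
    if_pos (self_mem_BB y)]
  show Tv l1 l2 l3 b12 b23 b2 y + _ = 1
  ring

lemma tsum_pker (y : ℤ × ℤ) : ∑' z : ℤ × ℤ, pker l1 l2 l3 b12 b23 b2 y z = 1 := by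
  rw [tsum_eq_sum (s := BB y) (fun z hz => supp_pker l1 l2 l3 b12 b23 b2 hz), sum_pker_BB]

lemma pker_le_one (hc : Ctx l1 l2 l3 b12 b23 b2) (y z : ℤ × ℤ) :
    pker l1 l2 l3 b12 b23 b2 y z ≤ 1 := by
  by_cases h : z ∈ BB y
  · calc pker l1 l2 l3 b12 b23 b2 y z
        ≤ ∑ w ∈ BB y, pker l1 l2 l3 b12 b23 b2 y w :=
          Finset.single_le_sum (fun w _ => pker_nonneg hc y w) h
    _ = 1 := sum_pker_BB y
  · rw [supp_pker l1 l2 l3 b12 b23 b2 h]; norm_num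

variable (l1 l2 l3)

/-- slope of the max-part of the Lyapunov function -/
def Ev : ℝ := (l1 + l2 + 1) / (l3 - l1)

/-- the Lyapunov function -/
def Vf (p : ℤ × ℤ) : ℝ :=
  ((max (-p.1) 0 : ℤ) : ℝ) ^ 2 + ((max p.1 0 : ℤ) : ℝ)
    + Ev l1 l2 l3 * ((max (max (-p.1) (-p.2)) 0 : ℤ) : ℝ) + ((max p.2 0 : ℤ) : ℝ)

variable {l1 l2 l3}

lemma Ev_nonneg (h12 : 0 ≤ l1 + l2 + 1) (h13 : l1 < l3) : 0 ≤ Ev l1 l2 l3 :=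
  div_nonneg h12 (by linarith)

lemma Vf_nonneg (h12 : 0 ≤ l1 + l2 + 1) (h13 : l1 < l3) (p : ℤ × ℤ) :
    0 ≤ Vf l1 l2 l3 p := by
  have h1 : (0:ℝ) ≤ ((max (-p.1) 0 : ℤ) : ℝ) := by exact_mod_cast le_max_right _ _
  have h2 : (0:ℝ) ≤ ((max p.1 0 : ℤ) : ℝ) := by exact_mod_cast le_max_right _ _
  have h3 : (0:ℝ) ≤ ((max (max (-p.1) (-p.2)) 0 : ℤ) : ℝ) := by
    exact_mod_cast le_max_right _ _
  have h4 : (0:ℝ) ≤ ((max p.2 0 : ℤ) : ℝ) := by exact_mod_cast le_max_right _ _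
  have := Ev_nonneg h12 h13
  unfold Vf
  have h5 := mul_nonneg this h3
  nlinarith [sq_nonneg (((max (-p.1) 0 : ℤ) : ℝ))]

lemma Vf_axis (k : ℕ) : Vf l1 l2 l3 ((0 : ℤ), (k : ℤ)) = (k : ℝ) := by
  unfold Vf
  rw [show max (-(0:ℤ)) 0 = 0 by omega, show max (0:ℤ) 0 = 0 by omega,
    show max (max (-(0:ℤ)) (-(k:ℤ))) 0 = 0 by omega, show max ((k:ℤ)) 0 = (k:ℤ) by omega]
  push_cast; ring

lemma group_bound (hc : Ctx l1 l2 l3 b12 b23 b2) (n : ℕ) (c : ℝ) (hnc : (n : ℝ) ≤ c) :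
    (∑ k ∈ Finset.range n, b12 * (1 - b2) ^ k * b2 * Vf l1 l2 l3 ((0:ℤ), (k:ℤ)))
      + b12 * (1 - b2) ^ n * c ≤ b12 * c := by
  have hq0 : (0:ℝ) ≤ 1 - b2 := by linarith [hc.hb2']
  have hw : ∀ k : ℕ, (0:ℝ) ≤ b12 * (1 - b2) ^ k * b2 :=
    fun k => mul_nonneg (mul_nonneg hc.hb12.le (pow_nonneg hq0 k)) hc.hb2.le
  have h1 : ∀ k ∈ Finset.range n, b12 * (1 - b2) ^ k * b2 * Vf l1 l2 l3 ((0:ℤ), (k:ℤ))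
      ≤ b12 * (1 - b2) ^ k * b2 * c := by
    intro k hk
    rw [Vf_axis]
    refine mul_le_mul_of_nonneg_left ?_ (hw k)
    have : k < n := Finset.mem_range.1 hk
    have : (k : ℝ) ≤ (n : ℝ) := by exact_mod_cast Nat.le_of_lt this
    linarith
  calc (∑ k ∈ Finset.range n, b12 * (1 - b2) ^ k * b2 * Vf l1 l2 l3 ((0:ℤ), (k:ℤ)))
        + b12 * (1 - b2) ^ n * c
      ≤ (∑ k ∈ Finset.range n, b12 * (1 - b2) ^ k * b2 * c) + b12 * (1 - b2) ^ n * c :=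
        add_le_add (Finset.sum_le_sum h1) le_rfl
    _ = ((∑ k ∈ Finset.range n, b12 * (1 - b2) ^ k * b2) + b12 * (1 - b2) ^ n) * c := by
        rw [add_mul, Finset.sum_mul]
    _ = b12 * c := by rw [group_mass]

/-- drift constants -/
def c0 (l1 l2 b12 b23 : ℝ) : ℝ := min (min (l2 - l1) b12) b23
def RB (l1 l2 l3 : ℝ) : ℝ := l1 + l2 + l3 + 1 + Ev l1 l2 l3 * (l1 + 1)

lemma Vf_pair (x y m1 m2 m3 m4 : ℤ) (h1 : max (-x) 0 = m1) (h2 : max x 0 = m2)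
    (h3 : max (max (-x) (-y)) 0 = m3) (h4 : max y 0 = m4) :
    Vf l1 l2 l3 (x, y) = (m1 : ℝ) ^ 2 + (m2 : ℝ) + Ev l1 l2 l3 * (m3 : ℝ) + (m4 : ℝ) := by
  unfold Vf
  rw [show (x, y).1 = x from rfl, show (x, y).2 = y from rfl, h1, h2, h3, h4]

set_option maxHeartbeats 2000000 in
lemma drift (hc : Ctx l1 l2 l3 b12 b23 b2) (k0 : ℕ) (hk1 : 1 ≤ k0)
    (hk : 2 * RB l1 l2 l3 ≤ (k0 : ℝ) * c0 l1 l2 b12 b23) (a b : ℤ)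
    (hout : ¬(a.natAbs ≤ k0 ∧ b.natAbs ≤ k0)) :
    ∑' z : ℤ × ℤ, pker l1 l2 l3 b12 b23 b2 (a, b) z * Vf l1 l2 l3 z
      ≤ Vf l1 l2 l3 (a, b) - 1 / 2 := by
  have hl1 := hc.hl1; have hl2 := hc.hl2; have hl3 := hc.hl3
  have hb12 := hc.hb12; have hb23 := hc.hb23
  have hd2 : 0 < l2 - l1 := by linarith [hc.h12]
  have hd3 : 0 < l3 - l1 := by linarith [hc.h13]
  have hEd3 : Ev l1 l2 l3 * (l3 - l1) = l1 + l2 + 1 :=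
    div_mul_cancel₀ _ (by linarith)
  have hEx : Ev l1 l2 l3 * l3 = Ev l1 l2 l3 * l1 + (l1 + l2 + 1) := by
    linear_combination hEd3
  have hE0 : 0 ≤ Ev l1 l2 l3 := Ev_nonneg (by linarith) hc.h13
  have hc0d2 : c0 l1 l2 b12 b23 ≤ l2 - l1 :=
    le_trans (min_le_left _ _) (min_le_left _ _)
  have hc0b12 : c0 l1 l2 b12 b23 ≤ b12 :=
    le_trans (min_le_left _ _) (min_le_right _ _)
  have hc0b23 : c0 l1 l2 b12 b23 ≤ b23 := min_le_right _ _
  have hc00 : 0 < c0 l1 l2 b12 b23 := lt_min (lt_min hd2 hb12) hb23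
  have hRBx : RB l1 l2 l3 = l1 + l2 + l3 + 1 + Ev l1 l2 l3 * l1 + Ev l1 l2 l3 := by
    rw [RB]; ring
  have hRB0 : 0 < RB l1 l2 l3 := by nlinarith
  have hsupp : ∀ z ∉ BB (a, b), pker l1 l2 l3 b12 b23 b2 (a, b) z * Vf l1 l2 l3 z = 0 :=
    fun z hz => by rw [supp_pker l1 l2 l3 b12 b23 b2 hz, zero_mul]
  have hpt : ∀ z ∈ BB (a, b), pker l1 l2 l3 b12 b23 b2 (a, b) z * Vf l1 l2 l3 z
      = (sker l1 l2 l3 (a, b) z + rker b12 b23 b2 (a, b) z) * Vf l1 l2 l3 z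
        + (if z = (a, b) then 1 - Tv l1 l2 l3 b12 b23 b2 (a, b) else 0) * Vf l1 l2 l3 z :=
    fun z _ => by rw [pker_eq, add_mul]
  rw [tsum_eq_sum hsupp, Finset.sum_congr rfl hpt, Finset.sum_add_distrib,
    key_eval l1 l2 l3 b12 b23 b2 a b (Vf l1 l2 l3),
    sum_point (BB (a, b)) (a, b) (self_mem_BB (a, b)) _ (Vf l1 l2 l3), Tv_eq]
  rcases lt_trichotomy a 0 with ha | ha | ha
  · -- a ≤ -1
    have c4 : ¬(0 < a ∧ b ≤ 0) := by omega
    have c6 : ¬(0 < b ∧ b ≤ a) := by omega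
    have c8 : ¬(0 < a ∧ a < b) := by omega
    rcases lt_trichotomy a b with hab | hab | hab
    · -- a < b
      simp only [if_neg c4, if_pos hab, if_neg c6, if_neg c8]
      rcases lt_trichotomy b 0 with hb | hb | hb
      · -- case 1 : b ≤ -1, a ≤ -2
        have hbig : (k0 : ℤ) + 1 ≤ -a := by omega
        have hbigR : (k0 : ℝ) + 1 ≤ -(a : ℝ) := by exact_mod_cast hbig
        rw [Vf_pair (a+1) b (-a-1) 0 (-a-1) 0 (by omega) (by omega) (by omega) (by omega),
          Vf_pair a (b+1) (-a) 0 (-a) 0 (by omega) (by omega) (by omega) (by omega),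
          Vf_pair (a-1) (b-1) (-a+1) 0 (-a+1) 0 (by omega) (by omega) (by omega) (by omega),
          Vf_pair a a (-a) 0 (-a) 0 (by omega) (by omega) (by omega) (by omega),
          Vf_pair a b (-a) 0 (-a) 0 (by omega) (by omega) (by omega) (by omega)]
        push_cast
        have hprod : 2 * RB l1 l2 l3 ≤ (-(a:ℝ)) * (l2 - l1) := by
          calc 2 * RB l1 l2 l3 ≤ (k0 : ℝ) * c0 l1 l2 b12 b23 := hk
          _ ≤ (-(a:ℝ)) * (l2 - l1) := by nlinarith
        nlinarith [mul_nonneg hE0 hd2.le]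
      · -- case 2 : b = 0
        subst hb
        have hbig : (k0 : ℤ) + 1 ≤ -a := by omega
        have hbigR : (k0 : ℝ) + 1 ≤ -(a : ℝ) := by exact_mod_cast hbig
        rw [Vf_pair (a+1) 0 (-a-1) 0 (-a-1) 0 (by omega) (by omega) (by omega) (by omega),
          Vf_pair a (0+1) (-a) 0 (-a) 1 (by omega) (by omega) (by omega) (by omega),
          Vf_pair (a-1) (0-1) (-a+1) 0 (-a+1) 0 (by omega) (by omega) (by omega) (by omega),
          Vf_pair a a (-a) 0 (-a) 0 (by omega) (by omega) (by omega) (by omega),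
          Vf_pair a 0 (-a) 0 (-a) 0 (by omega) (by omega) (by omega) (by omega)]
        push_cast
        have hprod : 2 * RB l1 l2 l3 ≤ (-(a:ℝ)) * (l2 - l1) := by
          calc 2 * RB l1 l2 l3 ≤ (k0 : ℝ) * c0 l1 l2 b12 b23 := hk
          _ ≤ (-(a:ℝ)) * (l2 - l1) := by nlinarith
        nlinarith [mul_nonneg hE0 hd2.le]
      · -- case 3 : b ≥ 1
        have hbig : (k0 : ℤ) + 1 ≤ -a ∨ (k0 : ℤ) + 1 ≤ b := by omega
        rw [Vf_pair (a+1) b (-a-1) 0 (-a-1) b (by omega) (by omega) (by omega) (by omega),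
          Vf_pair a (b+1) (-a) 0 (-a) (b+1) (by omega) (by omega) (by omega) (by omega),
          Vf_pair (a-1) (b-1) (-a+1) 0 (-a+1) (b-1) (by omega) (by omega) (by omega) (by omega),
          Vf_pair a a (-a) 0 (-a) 0 (by omega) (by omega) (by omega) (by omega),
          Vf_pair a b (-a) 0 (-a) b (by omega) (by omega) (by omega) (by omega)]
        push_cast
        rcases hbig with hbig | hbig
        · have hbigR : (k0 : ℝ) + 1 ≤ -(a : ℝ) := by exact_mod_cast hbig
          have hprod : 2 * RB l1 l2 l3 ≤ (-(a:ℝ)) * (l2 - l1) := by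
            calc 2 * RB l1 l2 l3 ≤ (k0 : ℝ) * c0 l1 l2 b12 b23 := hk
            _ ≤ (-(a:ℝ)) * (l2 - l1) := by nlinarith
          have hb0 : (1:ℝ) ≤ (b:ℝ) := by exact_mod_cast hb
          nlinarith [mul_nonneg hE0 hd2.le, mul_pos hb23 (by linarith : (0:ℝ) < (b:ℝ))]
        · have hbigR : (k0 : ℝ) + 1 ≤ (b : ℝ) := by exact_mod_cast hbig
          have hprod : 2 * RB l1 l2 l3 ≤ (b:ℝ) * b23 := by
            calc 2 * RB l1 l2 l3 ≤ (k0 : ℝ) * c0 l1 l2 b12 b23 := hk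
            _ ≤ (b:ℝ) * b23 := by nlinarith
          have hna : (1:ℝ) ≤ -(a:ℝ) := by exact_mod_cast (by omega : (1:ℤ) ≤ -a)
          nlinarith [mul_nonneg hE0 hd2.le, mul_pos hd2 (by linarith : (0:ℝ) < -(a:ℝ))]
    · -- case 4 : a = b ≤ -1
      subst hab
      simp only [if_neg c4, if_neg (lt_irrefl a), if_neg c6, if_neg c8]
      have hbig : (k0 : ℤ) + 1 ≤ -a := by omega
      have hbigR : (k0 : ℝ) + 1 ≤ -(a : ℝ) := by exact_mod_cast hbig
      rw [Vf_pair (a+1) a (-a-1) 0 (-a) 0 (by omega) (by omega) (by omega) (by omega),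
        Vf_pair a (a+1) (-a) 0 (-a) 0 (by omega) (by omega) (by omega) (by omega),
        Vf_pair (a-1) (a-1) (-a+1) 0 (-a+1) 0 (by omega) (by omega) (by omega) (by omega),
        Vf_pair a a (-a) 0 (-a) 0 (by omega) (by omega) (by omega) (by omega)]
      push_cast
      have hprod : 2 * RB l1 l2 l3 ≤ (-(a:ℝ)) * (l2 - l1) := by
        calc 2 * RB l1 l2 l3 ≤ (k0 : ℝ) * c0 l1 l2 b12 b23 := hk
        _ ≤ (-(a:ℝ)) * (l2 - l1) := by nlinarith
      nlinarith [mul_nonneg hE0 hd2.le]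
    · -- case 5 : b ≤ a - 1 ≤ -2
      have c5 : ¬(a < b) := by omega
      simp only [if_neg c4, if_neg c5, if_neg c6, if_neg c8]
      have hna : (1:ℝ) ≤ -(a:ℝ) := by exact_mod_cast (by omega : (1:ℤ) ≤ -a)
      rw [Vf_pair (a+1) b (-a-1) 0 (-b) 0 (by omega) (by omega) (by omega) (by omega),
        Vf_pair a (b+1) (-a) 0 (-b-1) 0 (by omega) (by omega) (by omega) (by omega),
        Vf_pair (a-1) (b-1) (-a+1) 0 (-b+1) 0 (by omega) (by omega) (by omega) (by omega),
        Vf_pair a b (-a) 0 (-b) 0 (by omega) (by omega) (by omega) (by omega)]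
      push_cast
      nlinarith [mul_pos hd2 (by linarith : (0:ℝ) < -(a:ℝ))]
  · -- a = 0
    subst ha
    have c4 : ¬((0:ℤ) < 0 ∧ b ≤ 0) := by omega
    have c6 : ¬(0 < b ∧ b ≤ (0:ℤ)) := by omega
    have c8 : ¬((0:ℤ) < 0 ∧ 0 < b) := by omega
    rcases lt_trichotomy b 0 with hb | hb | hb
    · -- case 6 : b ≤ -1
      have c5 : ¬((0:ℤ) < b) := by omega
      simp only [if_neg c4, if_neg c5, if_neg c6, if_neg c8]
      rw [Vf_pair (0+1) b 0 1 (-b) 0 (by omega) (by omega) (by omega) (by omega),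
        Vf_pair 0 (b+1) 0 0 (-b-1) 0 (by omega) (by omega) (by omega) (by omega),
        Vf_pair (0-1) (b-1) 1 0 (-b+1) 0 (by omega) (by omega) (by omega) (by omega),
        Vf_pair 0 b 0 0 (-b) 0 (by omega) (by omega) (by omega) (by omega)]
      push_cast
      nlinarith
    · exfalso; omega
    · -- case 7 : b ≥ 1, b ≥ k0+1
      have c5 : ((0:ℤ) < b) := hb
      simp only [if_neg c4, if_pos c5, if_neg c6, if_neg c8]
      have hbig : (k0 : ℤ) + 1 ≤ b := by omega
      have hbigR : (k0 : ℝ) + 1 ≤ (b : ℝ) := by exact_mod_cast hbig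
      rw [Vf_pair (0+1) b 0 1 0 b (by omega) (by omega) (by omega) (by omega),
        Vf_pair 0 (b+1) 0 0 0 (b+1) (by omega) (by omega) (by omega) (by omega),
        Vf_pair (0-1) (b-1) 1 0 1 (b-1) (by omega) (by omega) (by omega) (by omega),
        Vf_pair 0 0 0 0 0 0 (by omega) (by omega) (by omega) (by omega),
        Vf_pair 0 b 0 0 0 b (by omega) (by omega) (by omega) (by omega)]
      push_cast
      have hprod : 2 * RB l1 l2 l3 ≤ (b:ℝ) * b23 := by
        calc 2 * RB l1 l2 l3 ≤ (k0 : ℝ) * c0 l1 l2 b12 b23 := hk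
        _ ≤ (b:ℝ) * b23 := by nlinarith
      nlinarith
  · -- a ≥ 1
    have hapos : (1:ℝ) ≤ (a:ℝ) := by exact_mod_cast (by omega : (1:ℤ) ≤ a)
    rcases lt_trichotomy b 0 with hb | hb | hb
    · -- case 8 : b ≤ -1
      have c4 : (0 < a ∧ b ≤ 0) := by omega
      have c5 : ¬(a < b) := by omega
      have c6 : ¬(0 < b ∧ b ≤ a) := by omega
      have c8 : ¬(0 < a ∧ a < b) := by omega
      simp only [if_pos c4, if_neg c5, if_neg c6, if_neg c8]
      rw [Vf_pair (a+1) b 0 (a+1) (-b) 0 (by omega) (by omega) (by omega) (by omega),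
        Vf_pair a (b+1) 0 a (-b-1) 0 (by omega) (by omega) (by omega) (by omega),
        Vf_pair (a-1) (b-1) 0 (a-1) (-b+1) 0 (by omega) (by omega) (by omega) (by omega),
        Vf_pair 0 b 0 0 (-b) 0 (by omega) (by omega) (by omega) (by omega),
        Vf_pair a b 0 a (-b) 0 (by omega) (by omega) (by omega) (by omega)]
      push_cast
      nlinarith [mul_pos hb12 (by linarith : (0:ℝ) < (a:ℝ))]
    · -- case 9 : b = 0, a ≥ k0+1
      subst hb
      have c4 : (0 < a ∧ (0:ℤ) ≤ 0) := by omega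
      have c5 : ¬(a < 0) := by omega
      have c6 : ¬((0:ℤ) < 0 ∧ 0 ≤ a) := by omega
      have c8 : ¬(0 < a ∧ a < 0) := by omega
      simp only [if_pos c4, if_neg c5, if_neg c6, if_neg c8]
      have hbig : (k0 : ℤ) + 1 ≤ a := by omega
      have hbigR : (k0 : ℝ) + 1 ≤ (a : ℝ) := by exact_mod_cast hbig
      rw [Vf_pair (a+1) 0 0 (a+1) 0 0 (by omega) (by omega) (by omega) (by omega),
        Vf_pair a (0+1) 0 a 0 1 (by omega) (by omega) (by omega) (by omega),
        Vf_pair (a-1) (0-1) 0 (a-1) 1 0 (by omega) (by omega) (by omega) (by omega),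
        Vf_pair 0 0 0 0 0 0 (by omega) (by omega) (by omega) (by omega),
        Vf_pair a 0 0 a 0 0 (by omega) (by omega) (by omega) (by omega)]
      push_cast
      have hprod : 2 * RB l1 l2 l3 ≤ (a:ℝ) * b12 := by
        calc 2 * RB l1 l2 l3 ≤ (k0 : ℝ) * c0 l1 l2 b12 b23 := hk
        _ ≤ (a:ℝ) * b12 := by nlinarith
      nlinarith
    · rcases lt_trichotomy a b with hab | hab | hab'
      · -- case 11 : 1 ≤ a < b, b ≥ k0+1
        have c4 : ¬(0 < a ∧ b ≤ 0) := by omega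
        have c6 : ¬(0 < b ∧ b ≤ a) := by omega
        have c8 : (0 < a ∧ a < b) := by omega
        simp only [if_neg c4, if_pos hab, if_neg c6, if_pos c8]
        have hbig : (k0 : ℤ) + 1 ≤ b := by omega
        have hbigR : (k0 : ℝ) + 1 ≤ (b : ℝ) := by exact_mod_cast hbig
        have hgb : (∑ k ∈ Finset.range (a.toNat + 1),
              b12 * (1 - b2) ^ k * b2 * Vf l1 l2 l3 ((0:ℤ), (k:ℤ)))
            + b12 * (1 - b2) ^ (a.toNat + 1) * Vf l1 l2 l3 ((0:ℤ), b)
            ≤ b12 * (b:ℝ) := by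
          have h0b : Vf l1 l2 l3 ((0:ℤ), b) = (b:ℝ) := by
            rw [Vf_pair 0 b 0 0 0 b (by omega) (by omega) (by omega) (by omega)]
            push_cast; ring
          rw [h0b]
          refine group_bound hc (a.toNat + 1) (b:ℝ) ?_
          have : ((a.toNat:ℤ) : ℝ) + 1 ≤ (b : ℝ) := by exact_mod_cast (by omega : (a.toNat:ℤ) + 1 ≤ b)
          push_cast at this ⊢
          linarith
        rw [Vf_pair (a+1) b 0 (a+1) 0 b (by omega) (by omega) (by omega) (by omega),
          Vf_pair a (b+1) 0 a 0 (b+1) (by omega) (by omega) (by omega) (by omega),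
          Vf_pair (a-1) (b-1) 0 (a-1) 0 (b-1) (by omega) (by omega) (by omega) (by omega),
          Vf_pair a a 0 a 0 a (by omega) (by omega) (by omega) (by omega),
          Vf_pair a b 0 a 0 b (by omega) (by omega) (by omega) (by omega)]
        push_cast
        have habR : (a:ℝ) ≤ (b:ℝ) - 1 := by exact_mod_cast (by omega : a ≤ b - 1)
        -- b12*a + b23*(b-a) ≥ c0*b ≥ c0*(k0+1) ≥ 2RB
        have hkey : 2 * RB l1 l2 l3 ≤ b12 * (a:ℝ) + b23 * ((b:ℝ) - (a:ℝ)) := by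
          have h1 : c0 l1 l2 b12 b23 * (b:ℝ) ≤ b12 * (a:ℝ) + b23 * ((b:ℝ) - (a:ℝ)) := by
            nlinarith [mul_nonneg (by linarith : (0:ℝ) ≤ b12 - c0 l1 l2 b12 b23) (by linarith : (0:ℝ) ≤ (a:ℝ)),
              mul_nonneg (by linarith : (0:ℝ) ≤ b23 - c0 l1 l2 b12 b23) (by linarith : (0:ℝ) ≤ (b:ℝ) - (a:ℝ))]
          calc 2 * RB l1 l2 l3 ≤ (k0 : ℝ) * c0 l1 l2 b12 b23 := hk
          _ ≤ c0 l1 l2 b12 b23 * (b:ℝ) := by nlinarith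
          _ ≤ _ := h1
        nlinarith [hgb, mul_nonneg hE0 hl1.le]
      · -- a = b ≥ 1 : case 10 boundary (b = a)
        subst hab
        have c4 : ¬(0 < a ∧ a ≤ 0) := by omega
        have c5 : ¬(a < a) := lt_irrefl a
        have c6 : (0 < a ∧ a ≤ a) := by omega
        have c8 : ¬(0 < a ∧ a < a) := by omega
        simp only [if_pos c6, if_neg c4, if_neg c5, if_neg c8]
        have hbig : (k0 : ℤ) + 1 ≤ a := by omega
        have hbigR : (k0 : ℝ) + 1 ≤ (a : ℝ) := by exact_mod_cast hbig
        have hgb : (∑ k ∈ Finset.range (a.toNat),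
              b12 * (1 - b2) ^ k * b2 * Vf l1 l2 l3 ((0:ℤ), (k:ℤ)))
            + b12 * (1 - b2) ^ (a.toNat) * Vf l1 l2 l3 ((0:ℤ), a)
            ≤ b12 * (a:ℝ) := by
          have h0b : Vf l1 l2 l3 ((0:ℤ), a) = (a:ℝ) := by
            rw [Vf_pair 0 a 0 0 0 a (by omega) (by omega) (by omega) (by omega)]
            push_cast; ring
          rw [h0b]
          refine group_bound hc (a.toNat) (a:ℝ) ?_
          exact_mod_cast (by omega : ((a.toNat:ℤ)) ≤ a)
        rw [Vf_pair (a+1) a 0 (a+1) 0 a (by omega) (by omega) (by omega) (by omega),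
          Vf_pair a (a+1) 0 a 0 (a+1) (by omega) (by omega) (by omega) (by omega),
          Vf_pair (a-1) (a-1) 0 (a-1) 0 (a-1) (by omega) (by omega) (by omega) (by omega),
          Vf_pair a a 0 a 0 a (by omega) (by omega) (by omega) (by omega)]
        push_cast
        have hprod : 2 * RB l1 l2 l3 ≤ (a:ℝ) * b12 := by
          calc 2 * RB l1 l2 l3 ≤ (k0 : ℝ) * c0 l1 l2 b12 b23 := hk
          _ ≤ (a:ℝ) * b12 := by nlinarith
        nlinarith [hgb, mul_nonneg hE0 hl1.le]
      · -- case 10 : 1 ≤ b < a, a ≥ k0+1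
        have c4 : ¬(0 < a ∧ b ≤ 0) := by omega
        have c5 : ¬(a < b) := by omega
        have c6 : (0 < b ∧ b ≤ a) := by omega
        have c8 : ¬(0 < a ∧ a < b) := by omega
        simp only [if_pos c6, if_neg c4, if_neg c5, if_neg c8]
        have hbig : (k0 : ℤ) + 1 ≤ a := by omega
        have hbigR : (k0 : ℝ) + 1 ≤ (a : ℝ) := by exact_mod_cast hbig
        have hgb : (∑ k ∈ Finset.range (b.toNat),
              b12 * (1 - b2) ^ k * b2 * Vf l1 l2 l3 ((0:ℤ), (k:ℤ)))
            + b12 * (1 - b2) ^ (b.toNat) * Vf l1 l2 l3 ((0:ℤ), b)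
            ≤ b12 * (b:ℝ) := by
          have h0b : Vf l1 l2 l3 ((0:ℤ), b) = (b:ℝ) := by
            rw [Vf_pair 0 b 0 0 0 b (by omega) (by omega) (by omega) (by omega)]
            push_cast; ring
          rw [h0b]
          refine group_bound hc (b.toNat) (b:ℝ) ?_
          exact_mod_cast (by omega : ((b.toNat:ℤ)) ≤ b)
        rw [Vf_pair (a+1) b 0 (a+1) 0 b (by omega) (by omega) (by omega) (by omega),
          Vf_pair a (b+1) 0 a 0 (b+1) (by omega) (by omega) (by omega) (by omega),
          Vf_pair (a-1) (b-1) 0 (a-1) 0 (b-1) (by omega) (by omega) (by omega) (by omega),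
          Vf_pair a b 0 a 0 b (by omega) (by omega) (by omega) (by omega)]
        push_cast
        have hbR : (1:ℝ) ≤ (b:ℝ) := by exact_mod_cast (by omega : (1:ℤ) ≤ b)
        have hprod : 2 * RB l1 l2 l3 ≤ (a:ℝ) * b12 := by
          calc 2 * RB l1 l2 l3 ≤ (k0 : ℝ) * c0 l1 l2 b12 b23 := hk
          _ ≤ (a:ℝ) * b12 := by nlinarith
        nlinarith [hgb, mul_nonneg hE0 hl1.le]

variable (l1 l2 l3 b12 b23 b2)

/-- iterates of the chain started at the origin -/
def nu : ℕ → (ℤ × ℤ) → ℝ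
  | 0 => fun z => if z = ((0 : ℤ), (0 : ℤ)) then 1 else 0
  | (n + 1) => fun z => ∑ y ∈ box n, nu n y * pker l1 l2 l3 b12 b23 b2 y z

variable {l1 l2 l3 b12 b23 b2}

lemma box_mono {m n : ℕ} (h : m ≤ n) : box m ⊆ box n := by
  intro z hz; rw [mem_box] at hz ⊢; omega

lemma BB_sub_box {y : ℤ × ℤ} {n : ℕ} (hy : y ∈ box n) : BB y ⊆ box (n + 1) := by
  rw [mem_box] at hy
  intro z hz
  rw [BB, mem_box, Nrad] at hz
  rw [mem_box]
  omega

lemma nu_supp : ∀ n, ∀ z ∉ box n, nu l1 l2 l3 b12 b23 b2 n z = 0 := by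
  intro n
  induction n with
  | zero =>
    intro z hz
    have : ((0:ℤ), (0:ℤ)) ∈ box 0 := by rw [mem_box]; simp
    exact if_neg (fun h => hz (by rw [h]; exact this))
  | succ n ih =>
    intro z hz
    refine Finset.sum_eq_zero (fun y hy => ?_)
    rw [supp_pker l1 l2 l3 b12 b23 b2 (fun hmem => hz (BB_sub_box hy hmem)), mul_zero]

lemma nu_nonneg (hc : Ctx l1 l2 l3 b12 b23 b2) : ∀ n z, 0 ≤ nu l1 l2 l3 b12 b23 b2 n z := by
  intro n
  induction n with
  | zero => intro z; dsimp [nu]; split_ifs <;> norm_num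
  | succ n ih =>
    intro z
    exact Finset.sum_nonneg (fun y _ => mul_nonneg (ih y) (pker_nonneg hc y z))

lemma sum_pker_box {y : ℤ × ℤ} {n : ℕ} (hy : y ∈ box n) :
    ∑ z ∈ box (n + 1), pker l1 l2 l3 b12 b23 b2 y z = 1 := by
  rw [← sum_pker_BB (l1 := l1) (l2 := l2) (l3 := l3) (b12 := b12) (b23 := b23) (b2 := b2) y]
  exact (Finset.sum_subset (BB_sub_box hy)
    (fun z _ hz => supp_pker l1 l2 l3 b12 b23 b2 hz)).symm

lemma nu_mass : ∀ n, ∑ z ∈ box n, nu l1 l2 l3 b12 b23 b2 n z = 1 := by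
  intro n
  induction n with
  | zero =>
    have : ((0:ℤ), (0:ℤ)) ∈ box 0 := by rw [mem_box]; simp
    show ∑ z ∈ box 0, (if z = ((0:ℤ),(0:ℤ)) then (1:ℝ) else 0) = 1
    rw [Finset.sum_ite_eq' (box 0) ((0:ℤ),(0:ℤ)) (fun _ => (1:ℝ)), if_pos this]
  | succ n ih =>
    show ∑ z ∈ box (n+1), ∑ y ∈ box n, nu l1 l2 l3 b12 b23 b2 n y * pker l1 l2 l3 b12 b23 b2 y z = 1
    rw [Finset.sum_comm]
    calc ∑ y ∈ box n, ∑ z ∈ box (n+1), nu l1 l2 l3 b12 b23 b2 n y * pker l1 l2 l3 b12 b23 b2 y z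
        = ∑ y ∈ box n, nu l1 l2 l3 b12 b23 b2 n y * ∑ z ∈ box (n+1), pker l1 l2 l3 b12 b23 b2 y z := by
          exact Finset.sum_congr rfl (fun y _ => (Finset.mul_sum _ _ _).symm)
      _ = ∑ y ∈ box n, nu l1 l2 l3 b12 b23 b2 n y := by
          refine Finset.sum_congr rfl (fun y hy => ?_)
          rw [sum_pker_box hy, mul_one]
      _ = 1 := ih

lemma nu_mass_ge {n m : ℕ} (h : n ≤ m) : ∑ z ∈ box m, nu l1 l2 l3 b12 b23 b2 n z = 1 := by
  rw [← nu_mass (l1 := l1) (l2 := l2) (l3 := l3) (b12 := b12) (b23 := b23) (b2 := b2) n]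
  exact (Finset.sum_subset (box_mono h) (fun z _ hz => nu_supp n z hz)).symm

lemma nu_le_one (hc : Ctx l1 l2 l3 b12 b23 b2) (n : ℕ) (z : ℤ × ℤ) :
    nu l1 l2 l3 b12 b23 b2 n z ≤ 1 := by
  by_cases hz : z ∈ box n
  · calc nu l1 l2 l3 b12 b23 b2 n z ≤ ∑ w ∈ box n, nu l1 l2 l3 b12 b23 b2 n w :=
      Finset.single_le_sum (fun w _ => nu_nonneg hc n w) hz
    _ = 1 := nu_mass n
  · rw [nu_supp n z hz]; norm_num

variable (l1 l2 l3 b12 b23 b2)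

def Wn (n : ℕ) : ℝ := ∑ z ∈ box n, nu l1 l2 l3 b12 b23 b2 n z * Vf l1 l2 l3 z

def CV (k0 : ℕ) : ℝ :=
  ((k0:ℝ)+1)^2 + ((k0:ℝ)+1) + Ev l1 l2 l3 * ((k0:ℝ)+1) + ((k0:ℝ)+1)

def KMass (k0 n : ℕ) : ℝ := ∑ z ∈ box k0, nu l1 l2 l3 b12 b23 b2 n z

variable {l1 l2 l3 b12 b23 b2}

lemma Vf_le_CV (hc : Ctx l1 l2 l3 b12 b23 b2) (k0 : ℕ) {z : ℤ × ℤ}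
    (hz : z ∈ box (k0 + 1)) : Vf l1 l2 l3 z ≤ CV l1 l2 l3 k0 := by
  rw [mem_box] at hz
  have hE0 : 0 ≤ Ev l1 l2 l3 := Ev_nonneg (by nlinarith [hc.hl1, hc.hl2]) hc.h13
  have c1 : ((max (-z.1) 0 : ℤ):ℝ) ≤ (k0:ℝ) + 1 := by
    exact_mod_cast (by omega : (max (-z.1) 0 : ℤ) ≤ (k0:ℤ) + 1)
  have c1' : (0:ℝ) ≤ ((max (-z.1) 0 : ℤ):ℝ) := by
    exact_mod_cast (by omega : (0:ℤ) ≤ max (-z.1) 0)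
  have c2 : ((max z.1 0 : ℤ):ℝ) ≤ (k0:ℝ) + 1 := by
    exact_mod_cast (by omega : (max z.1 0 : ℤ) ≤ (k0:ℤ) + 1)
  have c3 : ((max (max (-z.1) (-z.2)) 0 : ℤ):ℝ) ≤ (k0:ℝ) + 1 := by
    exact_mod_cast (by omega : (max (max (-z.1) (-z.2)) 0 : ℤ) ≤ (k0:ℤ) + 1)
  have c4 : ((max z.2 0 : ℤ):ℝ) ≤ (k0:ℝ) + 1 := by
    exact_mod_cast (by omega : (max z.2 0 : ℤ) ≤ (k0:ℤ) + 1)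
  unfold Vf CV
  nlinarith [mul_le_mul_of_nonneg_left c3 hE0,
    mul_self_le_mul_self c1' c1]

lemma tsum_KV_le_CV (hc : Ctx l1 l2 l3 b12 b23 b2) (k0 : ℕ) {y : ℤ × ℤ}
    (hy : y ∈ box k0) :
    ∑' z : ℤ × ℤ, pker l1 l2 l3 b12 b23 b2 y z * Vf l1 l2 l3 z ≤ CV l1 l2 l3 k0 := by
  have hsupp : ∀ z ∉ BB y, pker l1 l2 l3 b12 b23 b2 y z * Vf l1 l2 l3 z = 0 :=
    fun z hz => by rw [supp_pker l1 l2 l3 b12 b23 b2 hz, zero_mul]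
  rw [tsum_eq_sum hsupp]
  have hBB := BB_sub_box hy
  calc ∑ z ∈ BB y, pker l1 l2 l3 b12 b23 b2 y z * Vf l1 l2 l3 z
      ≤ ∑ z ∈ BB y, pker l1 l2 l3 b12 b23 b2 y z * CV l1 l2 l3 k0 := by
        refine Finset.sum_le_sum (fun z hz => ?_)
        exact mul_le_mul_of_nonneg_left (Vf_le_CV hc k0 (hBB hz)) (pker_nonneg hc y z)
    _ = (∑ z ∈ BB y, pker l1 l2 l3 b12 b23 b2 y z) * CV l1 l2 l3 k0 :=
        (Finset.sum_mul _ _ _).symm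
    _ = CV l1 l2 l3 k0 := by rw [sum_pker_BB, one_mul]

lemma Wstep (hc : Ctx l1 l2 l3 b12 b23 b2) (k0 : ℕ) (hk1 : 1 ≤ k0)
    (hk : 2 * RB l1 l2 l3 ≤ (k0 : ℝ) * c0 l1 l2 b12 b23) (n : ℕ) :
    Wn l1 l2 l3 b12 b23 b2 (n + 1)
      ≤ Wn l1 l2 l3 b12 b23 b2 n - 1/2
        + (CV l1 l2 l3 k0 + 1) * KMass l1 l2 l3 b12 b23 b2 k0 n := by
  have hE0 : 0 ≤ Ev l1 l2 l3 := Ev_nonneg (by nlinarith [hc.hl1, hc.hl2]) hc.h13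
  have hCV0 : 0 ≤ CV l1 l2 l3 k0 := by
    have : (0:ℝ) ≤ (k0:ℝ) + 1 := by positivity
    have := mul_nonneg hE0 this
    unfold CV; positivity
  have hVnn : ∀ p, 0 ≤ Vf l1 l2 l3 p :=
    Vf_nonneg (by nlinarith [hc.hl1, hc.hl2]) hc.h13
  -- inner sums equal the tsum
  have hinner : ∀ y ∈ box n, ∑ z ∈ box (n + 1), pker l1 l2 l3 b12 b23 b2 y z * Vf l1 l2 l3 z
      = ∑' z : ℤ × ℤ, pker l1 l2 l3 b12 b23 b2 y z * Vf l1 l2 l3 z := by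
    intro y hy
    have hsupp : ∀ z ∉ BB y, pker l1 l2 l3 b12 b23 b2 y z * Vf l1 l2 l3 z = 0 :=
      fun z hz => by rw [supp_pker l1 l2 l3 b12 b23 b2 hz, zero_mul]
    rw [tsum_eq_sum hsupp]
    exact (Finset.sum_subset (BB_sub_box hy) (fun z _ hz => hsupp z hz)).symm
  have step1 : Wn l1 l2 l3 b12 b23 b2 (n + 1)
      = ∑ y ∈ box n, nu l1 l2 l3 b12 b23 b2 n y *
          (∑' z : ℤ × ℤ, pker l1 l2 l3 b12 b23 b2 y z * Vf l1 l2 l3 z) := by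
    unfold Wn
    show ∑ z ∈ box (n+1), (∑ y ∈ box n, nu l1 l2 l3 b12 b23 b2 n y * pker l1 l2 l3 b12 b23 b2 y z)
        * Vf l1 l2 l3 z = _
    rw [show ∀ (f : (ℤ×ℤ) → ℝ), (∑ z ∈ box (n+1), (∑ y ∈ box n, nu l1 l2 l3 b12 b23 b2 n y * pker l1 l2 l3 b12 b23 b2 y z) * f z) = ∑ z ∈ box (n+1), ∑ y ∈ box n, nu l1 l2 l3 b12 b23 b2 n y * (pker l1 l2 l3 b12 b23 b2 y z * f z)
      from fun f => Finset.sum_congr rfl (fun z _ => by rw [Finset.sum_mul]; exact Finset.sum_congr rfl (fun y _ => by ring)),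
      Finset.sum_comm]
    refine Finset.sum_congr rfl (fun y hy => ?_)
    rw [← Finset.mul_sum, hinner y hy]
  rw [step1]
  have hbound : ∀ y ∈ box n, nu l1 l2 l3 b12 b23 b2 n y *
      (∑' z : ℤ × ℤ, pker l1 l2 l3 b12 b23 b2 y z * Vf l1 l2 l3 z)
      ≤ nu l1 l2 l3 b12 b23 b2 n y * (Vf l1 l2 l3 y - 1/2)
        + (if y ∈ box k0 then nu l1 l2 l3 b12 b23 b2 n y * (CV l1 l2 l3 k0 + 1) else 0) := by
    intro y hy
    by_cases hyK : y ∈ box k0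
    · rw [if_pos hyK]
      have h1 := tsum_KV_le_CV hc k0 hyK
      have h2 := nu_nonneg hc n y
      nlinarith [hVnn y]
    · rw [if_neg hyK, add_zero]
      rcases y with ⟨ya, yb⟩
      have h1 := drift hc k0 hk1 hk ya yb (by rw [mem_box] at hyK; omega)
      exact mul_le_mul_of_nonneg_left h1 (nu_nonneg hc n _)
  calc ∑ y ∈ box n, nu l1 l2 l3 b12 b23 b2 n y *
        (∑' z : ℤ × ℤ, pker l1 l2 l3 b12 b23 b2 y z * Vf l1 l2 l3 z)
      ≤ ∑ y ∈ box n, (nu l1 l2 l3 b12 b23 b2 n y * (Vf l1 l2 l3 y - 1/2)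
          + (if y ∈ box k0 then nu l1 l2 l3 b12 b23 b2 n y * (CV l1 l2 l3 k0 + 1) else 0)) :=
        Finset.sum_le_sum hbound
    _ = (∑ y ∈ box n, nu l1 l2 l3 b12 b23 b2 n y * Vf l1 l2 l3 y)
        - (1/2) * (∑ y ∈ box n, nu l1 l2 l3 b12 b23 b2 n y)
        + (∑ y ∈ box n, if y ∈ box k0 then nu l1 l2 l3 b12 b23 b2 n y * (CV l1 l2 l3 k0 + 1) else 0) := by
        have e1 : ∑ y ∈ box n, nu l1 l2 l3 b12 b23 b2 n y * (Vf l1 l2 l3 y - 1/2)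
            = (∑ y ∈ box n, nu l1 l2 l3 b12 b23 b2 n y * Vf l1 l2 l3 y)
              - (1/2) * ∑ y ∈ box n, nu l1 l2 l3 b12 b23 b2 n y := by
          rw [Finset.mul_sum, ← Finset.sum_sub_distrib]
          exact Finset.sum_congr rfl (fun y _ => by ring)
        rw [Finset.sum_add_distrib, e1]
    _ ≤ Wn l1 l2 l3 b12 b23 b2 n - 1/2
        + (CV l1 l2 l3 k0 + 1) * KMass l1 l2 l3 b12 b23 b2 k0 n := by
        rw [nu_mass]
        have hfil : (∑ y ∈ box n, if y ∈ box k0 then nu l1 l2 l3 b12 b23 b2 n y * (CV l1 l2 l3 k0 + 1) else 0)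
            ≤ (CV l1 l2 l3 k0 + 1) * KMass l1 l2 l3 b12 b23 b2 k0 n := by
          rw [Finset.sum_ite_mem]
          unfold KMass
          rw [Finset.mul_sum]
          calc ∑ y ∈ box n ∩ box k0, nu l1 l2 l3 b12 b23 b2 n y * (CV l1 l2 l3 k0 + 1)
              ≤ ∑ y ∈ box k0, nu l1 l2 l3 b12 b23 b2 n y * (CV l1 l2 l3 k0 + 1) := by
                refine Finset.sum_le_sum_of_subset_of_nonneg Finset.inter_subset_right ?_
                intro y _ _
                exact mul_nonneg (nu_nonneg hc n y) (by linarith)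
            _ = ∑ y ∈ box k0, (CV l1 l2 l3 k0 + 1) * nu l1 l2 l3 b12 b23 b2 n y :=
                Finset.sum_congr rfl (fun y _ => by ring)
        unfold Wn
        linarith

lemma W_zero : Wn l1 l2 l3 b12 b23 b2 0 = 0 := by
  unfold Wn
  have hmem : ((0:ℤ), (0:ℤ)) ∈ box 0 := by rw [mem_box]; simp
  show ∑ z ∈ box 0, (if z = ((0:ℤ),(0:ℤ)) then (1:ℝ) else 0) * Vf l1 l2 l3 z = 0
  rw [sum_point (box 0) ((0:ℤ),(0:ℤ)) hmem 1 (Vf l1 l2 l3), one_mul,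
    Vf_pair 0 0 0 0 0 0 (by omega) (by omega) (by omega) (by omega)]
  norm_num

lemma W_nonneg (hc : Ctx l1 l2 l3 b12 b23 b2) (n : ℕ) : 0 ≤ Wn l1 l2 l3 b12 b23 b2 n :=
  Finset.sum_nonneg fun z _ => mul_nonneg (nu_nonneg hc n z)
    (Vf_nonneg (by nlinarith [hc.hl1, hc.hl2]) hc.h13 z)

lemma occupation (hc : Ctx l1 l2 l3 b12 b23 b2) (k0 : ℕ) (hk1 : 1 ≤ k0)
    (hk : 2 * RB l1 l2 l3 ≤ (k0 : ℝ) * c0 l1 l2 b12 b23) (n : ℕ) :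
    (n : ℝ) * (1/2) ≤ (CV l1 l2 l3 k0 + 1)
      * ∑ j ∈ Finset.range n, KMass l1 l2 l3 b12 b23 b2 k0 j := by
  have key : ∀ m : ℕ, Wn l1 l2 l3 b12 b23 b2 m + (m : ℝ) * (1/2)
      ≤ (CV l1 l2 l3 k0 + 1) * ∑ j ∈ Finset.range m, KMass l1 l2 l3 b12 b23 b2 k0 j := by
    intro m
    induction m with
    | zero => simp [W_zero]
    | succ m ih =>
      have hstep := Wstep hc k0 hk1 hk m
      rw [Finset.sum_range_succ, mul_add]
      push_cast
      linarith
  have := key n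
  linarith [W_nonneg hc n]

variable (l1 l2 l3 b12 b23 b2)

/-- Cesàro numerators -/
def An (n : ℕ) (z : ℤ × ℤ) : ℝ := ∑ j ∈ Finset.range n, nu l1 l2 l3 b12 b23 b2 j z

/-- Cesàro averages -/
def mu (n : ℕ) (z : ℤ × ℤ) : ℝ := An l1 l2 l3 b12 b23 b2 n z / n

variable {l1 l2 l3 b12 b23 b2}

lemma An_supp {n : ℕ} {z : ℤ × ℤ} (hz : z ∉ box n) : An l1 l2 l3 b12 b23 b2 n z = 0 :=
  Finset.sum_eq_zero fun j hj =>
    nu_supp j z (fun hmem => hz (box_mono (Nat.le_of_lt (Finset.mem_range.1 hj)) hmem))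

lemma mu_nonneg (hc : Ctx l1 l2 l3 b12 b23 b2) (n : ℕ) (z : ℤ × ℤ) :
    0 ≤ mu l1 l2 l3 b12 b23 b2 n z :=
  div_nonneg (Finset.sum_nonneg fun j _ => nu_nonneg hc j z) (Nat.cast_nonneg n)

lemma mu_le_one (hc : Ctx l1 l2 l3 b12 b23 b2) (n : ℕ) (z : ℤ × ℤ) :
    mu l1 l2 l3 b12 b23 b2 n z ≤ 1 := by
  rcases Nat.eq_zero_or_pos n with rfl | hn
  · unfold mu An; simp
  · have h1 : An l1 l2 l3 b12 b23 b2 n z ≤ (n : ℝ) := by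
      calc An l1 l2 l3 b12 b23 b2 n z ≤ ∑ j ∈ Finset.range n, 1 :=
        Finset.sum_le_sum (fun j _ => nu_le_one hc j z)
      _ = (n : ℝ) := by simp
    rw [mu, div_le_one (by exact_mod_cast hn)]
    exact h1

lemma sum_nu_finset_le (hc : Ctx l1 l2 l3 b12 b23 b2) (j : ℕ) (F : Finset (ℤ × ℤ)) :
    ∑ z ∈ F, nu l1 l2 l3 b12 b23 b2 j z ≤ 1 := by
  calc ∑ z ∈ F, nu l1 l2 l3 b12 b23 b2 j z
      ≤ ∑ z ∈ F ∪ box j, nu l1 l2 l3 b12 b23 b2 j z :=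
        Finset.sum_le_sum_of_subset_of_nonneg Finset.subset_union_left
          (fun z _ _ => nu_nonneg hc j z)
    _ = ∑ z ∈ box j, nu l1 l2 l3 b12 b23 b2 j z :=
        (Finset.sum_subset Finset.subset_union_right
          (fun z _ hz => nu_supp j z hz)).symm
    _ = 1 := nu_mass j

lemma sum_mu_finset_le (hc : Ctx l1 l2 l3 b12 b23 b2) (n : ℕ) (F : Finset (ℤ × ℤ)) :
    ∑ z ∈ F, mu l1 l2 l3 b12 b23 b2 n z ≤ 1 := by
  rcases Nat.eq_zero_or_pos n with rfl | hn
  · unfold mu An; simp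
  · have h1 : ∑ z ∈ F, An l1 l2 l3 b12 b23 b2 n z ≤ (n : ℝ) := by
      unfold An
      rw [Finset.sum_comm]
      calc ∑ j ∈ Finset.range n, ∑ z ∈ F, nu l1 l2 l3 b12 b23 b2 j z
          ≤ ∑ j ∈ Finset.range n, 1 :=
            Finset.sum_le_sum (fun j _ => sum_nu_finset_le hc j F)
        _ = (n : ℝ) := by simp
    unfold mu
    rw [← Finset.sum_div, div_le_one (by exact_mod_cast hn)]
    exact h1

lemma mu_box_mass (hc : Ctx l1 l2 l3 b12 b23 b2) (k0 : ℕ) (hk1 : 1 ≤ k0)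
    (hk : 2 * RB l1 l2 l3 ≤ (k0 : ℝ) * c0 l1 l2 b12 b23) (n : ℕ) (hn : 0 < n) :
    1 / (2 * (CV l1 l2 l3 k0 + 1)) ≤ ∑ z ∈ box k0, mu l1 l2 l3 b12 b23 b2 n z := by
  have hCV0 : 0 < CV l1 l2 l3 k0 + 1 := by
    have hE0 : 0 ≤ Ev l1 l2 l3 := Ev_nonneg (by nlinarith [hc.hl1, hc.hl2]) hc.h13
    have h2 : (0:ℝ) ≤ (k0:ℝ) + 1 := by positivity
    have := mul_nonneg hE0 h2
    unfold CV; nlinarith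
  have hocc := occupation hc k0 hk1 hk n
  have hsum : ∑ z ∈ box k0, An l1 l2 l3 b12 b23 b2 n z
      = ∑ j ∈ Finset.range n, KMass l1 l2 l3 b12 b23 b2 k0 j := by
    unfold An KMass
    exact Finset.sum_comm
  have hnR : (0:ℝ) < n := by exact_mod_cast hn
  unfold mu
  rw [← Finset.sum_div, hsum, le_div_iff₀ hnR, div_mul_eq_mul_div,
    div_le_iff₀ (by linarith : (0:ℝ) < 2 * (CV l1 l2 l3 k0 + 1))]
  nlinarith [hocc]

lemma mu_kernel (hc : Ctx l1 l2 l3 b12 b23 b2) (n : ℕ) (hn : 0 < n) (z : ℤ × ℤ) :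
    ∑ y ∈ box n, mu l1 l2 l3 b12 b23 b2 n y * pker l1 l2 l3 b12 b23 b2 y z
      ≤ mu l1 l2 l3 b12 b23 b2 n z + 1 / n := by
  have hnR : (0:ℝ) < n := by exact_mod_cast hn
  have key : ∑ y ∈ box n, An l1 l2 l3 b12 b23 b2 n y * pker l1 l2 l3 b12 b23 b2 y z
      = An l1 l2 l3 b12 b23 b2 n z + nu l1 l2 l3 b12 b23 b2 n z
        - nu l1 l2 l3 b12 b23 b2 0 z := by
    have h1 : ∀ j ∈ Finset.range n,
        ∑ y ∈ box n, nu l1 l2 l3 b12 b23 b2 j y * pker l1 l2 l3 b12 b23 b2 y z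
        = nu l1 l2 l3 b12 b23 b2 (j+1) z := by
      intro j hj
      have hjn : j ≤ n := Nat.le_of_lt (Finset.mem_range.1 hj)
      show _ = ∑ y ∈ box j, nu l1 l2 l3 b12 b23 b2 j y * pker l1 l2 l3 b12 b23 b2 y z
      exact (Finset.sum_subset (box_mono hjn)
        (fun y _ hy => by rw [nu_supp j y hy, zero_mul])).symm
    calc ∑ y ∈ box n, An l1 l2 l3 b12 b23 b2 n y * pker l1 l2 l3 b12 b23 b2 y z
        = ∑ y ∈ box n, ∑ j ∈ Finset.range n,
            nu l1 l2 l3 b12 b23 b2 j y * pker l1 l2 l3 b12 b23 b2 y z := by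
          refine Finset.sum_congr rfl (fun y _ => ?_)
          rw [An, Finset.sum_mul]
      _ = ∑ j ∈ Finset.range n, ∑ y ∈ box n,
            nu l1 l2 l3 b12 b23 b2 j y * pker l1 l2 l3 b12 b23 b2 y z := Finset.sum_comm
      _ = ∑ j ∈ Finset.range n, nu l1 l2 l3 b12 b23 b2 (j+1) z :=
          Finset.sum_congr rfl h1
      _ = ∑ j ∈ Finset.range (n+1), nu l1 l2 l3 b12 b23 b2 j z
            - nu l1 l2 l3 b12 b23 b2 0 z := by
          rw [Finset.sum_range_succ' (fun j => nu l1 l2 l3 b12 b23 b2 j z) n]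
          ring
      _ = _ := by
          rw [show An l1 l2 l3 b12 b23 b2 n z + nu l1 l2 l3 b12 b23 b2 n z
            = ∑ j ∈ Finset.range (n+1), nu l1 l2 l3 b12 b23 b2 j z by
              rw [An, Finset.sum_range_succ]]
  have h2 : ∑ y ∈ box n, mu l1 l2 l3 b12 b23 b2 n y * pker l1 l2 l3 b12 b23 b2 y z
      = (∑ y ∈ box n, An l1 l2 l3 b12 b23 b2 n y * pker l1 l2 l3 b12 b23 b2 y z) / n := by
    rw [Finset.sum_div]
    exact Finset.sum_congr rfl (fun y _ => by rw [mu, div_mul_eq_mul_div])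
  rw [h2, key, mu]
  have h3 : 0 ≤ nu l1 l2 l3 b12 b23 b2 0 z := nu_nonneg hc 0 z
  have h4 : nu l1 l2 l3 b12 b23 b2 n z ≤ 1 := nu_le_one hc n z
  rw [div_le_iff₀ hnR, add_mul, div_mul_cancel₀ _ (ne_of_gt hnR),
    div_mul_cancel₀ _ (ne_of_gt hnR)]
  linarith

lemma mu_supp {n : ℕ} {z : ℤ × ℤ} (hz : z ∉ box n) : mu l1 l2 l3 b12 b23 b2 n z = 0 := by
  rw [mu, An_supp hz, zero_div]

lemma summable_pker_row (y : ℤ × ℤ) :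
    Summable (fun z => pker l1 l2 l3 b12 b23 b2 y z) :=
  summable_of_ne_finset_zero (s := BB y) (fun z hz => supp_pker l1 l2 l3 b12 b23 b2 hz)

lemma exists_inv (hc : Ctx l1 l2 l3 b12 b23 b2) :
    ∃ π : ℤ × ℤ → ℝ, (∀ y, 0 ≤ π y) ∧ Summable π ∧ (∑' y : ℤ × ℤ, π y) = 1 ∧
      ∀ z : ℤ × ℤ, Summable (fun y : ℤ × ℤ => π y * pker l1 l2 l3 b12 b23 b2 y z) ∧
        (∑' y : ℤ × ℤ, π y * pker l1 l2 l3 b12 b23 b2 y z) = π z := by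
  classical
  have hd2 : 0 < l2 - l1 := by linarith [hc.h12]
  have hc00 : 0 < c0 l1 l2 b12 b23 := lt_min (lt_min hd2 hc.hb12) hc.hb23
  obtain ⟨k0, hk0⟩ := exists_nat_ge (max (2 * RB l1 l2 l3 / c0 l1 l2 b12 b23) 1)
  have hk1 : 1 ≤ k0 := by
    have h1 : (1:ℝ) ≤ (k0:ℝ) := le_trans (le_max_right _ _) hk0
    exact_mod_cast h1
  have hk : 2 * RB l1 l2 l3 ≤ (k0 : ℝ) * c0 l1 l2 b12 b23 := by
    have h1 : 2 * RB l1 l2 l3 / c0 l1 l2 b12 b23 ≤ (k0:ℝ) :=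
      le_trans (le_max_left _ _) hk0
    calc 2 * RB l1 l2 l3 = (2 * RB l1 l2 l3 / c0 l1 l2 b12 b23) * c0 l1 l2 b12 b23 := by
          field_simp
    _ ≤ (k0 : ℝ) * c0 l1 l2 b12 b23 := mul_le_mul_of_nonneg_right h1 hc00.le
  have hCV1 : 0 < CV l1 l2 l3 k0 + 1 := by
    have hE0 : 0 ≤ Ev l1 l2 l3 := Ev_nonneg (by nlinarith [hc.hl1, hc.hl2]) hc.h13
    have h2 : (0:ℝ) ≤ (k0:ℝ) + 1 := by positivity
    have := mul_nonneg hE0 h2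
    unfold CV; nlinarith
  -- sequential compactness of [0,1]^{ℤ²}
  set S : Set ((ℤ × ℤ) → ℝ) := Set.univ.pi (fun _ => Set.Icc (0:ℝ) 1) with hS
  have hScomp : IsCompact S := isCompact_univ_pi (fun _ => isCompact_Icc)
  have hseq : ∀ j : ℕ, (fun z => mu l1 l2 l3 b12 b23 b2 (j+1) z) ∈ S := by
    intro j
    rw [hS, Set.mem_univ_pi]
    exact fun z => ⟨mu_nonneg hc _ z, mu_le_one hc _ z⟩
  obtain ⟨μ, hμS, φ, hφ, hconv⟩ := hScomp.isSeqCompact hseq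
  have hpt : ∀ z, Filter.Tendsto (fun j => mu l1 l2 l3 b12 b23 b2 (φ j + 1) z)
      Filter.atTop (nhds (μ z)) := fun z => (tendsto_pi_nhds.1 hconv) z
  have hμ0 : ∀ z, 0 ≤ μ z := by
    rw [hS, Set.mem_univ_pi] at hμS
    exact fun z => (hμS z).1
  have hFle : ∀ F : Finset (ℤ × ℤ), ∑ z ∈ F, μ z ≤ 1 := by
    intro F
    refine le_of_tendsto (tendsto_finset_sum F (fun z _ => hpt z))
      (Filter.Eventually.of_forall (fun j => sum_mu_finset_le hc _ F))
  have hsumμ : Summable μ := summable_of_sum_le (fun z => hμ0 z) hFle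
  have hmassK : 1 / (2 * (CV l1 l2 l3 k0 + 1)) ≤ ∑ z ∈ box k0, μ z := by
    refine ge_of_tendsto (tendsto_finset_sum (box k0) (fun z _ => hpt z))
      (Filter.Eventually.of_forall (fun j => ?_))
    exact mu_box_mass hc k0 hk1 hk (φ j + 1) (Nat.succ_pos _)
  have htsumμ_pos : 0 < ∑' z : ℤ × ℤ, μ z := by
    have h1 : (0:ℝ) < 1 / (2 * (CV l1 l2 l3 k0 + 1)) := by positivity
    calc (0:ℝ) < 1 / (2 * (CV l1 l2 l3 k0 + 1)) := h1
    _ ≤ ∑ z ∈ box k0, μ z := hmassK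
    _ ≤ ∑' z : ℤ × ℤ, μ z := Summable.sum_le_tsum (box k0) (fun z _ => hμ0 z) hsumμ
  -- vanishing 1/n along the subsequence
  have hone : Filter.Tendsto (fun j : ℕ => 1 / ((φ j + 1 : ℕ) : ℝ)) Filter.atTop (nhds 0) := by
    have h1 : Filter.Tendsto (fun n : ℕ => 1 / ((n : ℝ) + 1)) Filter.atTop (nhds 0) :=
      tendsto_one_div_add_atTop_nhds_zero_nat
    have h2 := h1.comp hφ.tendsto_atTop
    refine h2.congr (fun j => ?_)
    push_cast
    rfl
  -- sub-invariance
  have hsubF : ∀ (z : ℤ × ℤ) (F : Finset (ℤ × ℤ)),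
      ∑ y ∈ F, μ y * pker l1 l2 l3 b12 b23 b2 y z ≤ μ z := by
    intro z F
    have hn : ∀ j : ℕ, ∑ y ∈ F, mu l1 l2 l3 b12 b23 b2 (φ j + 1) y
        * pker l1 l2 l3 b12 b23 b2 y z
        ≤ mu l1 l2 l3 b12 b23 b2 (φ j + 1) z + 1 / ((φ j + 1 : ℕ) : ℝ) := by
      intro j
      set n := φ j + 1 with hn'
      calc ∑ y ∈ F, mu l1 l2 l3 b12 b23 b2 n y * pker l1 l2 l3 b12 b23 b2 y z
          ≤ ∑ y ∈ F ∪ box n, mu l1 l2 l3 b12 b23 b2 n y * pker l1 l2 l3 b12 b23 b2 y z :=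
            Finset.sum_le_sum_of_subset_of_nonneg Finset.subset_union_left
              (fun y _ _ => mul_nonneg (mu_nonneg hc n y) (pker_nonneg hc y z))
        _ = ∑ y ∈ box n, mu l1 l2 l3 b12 b23 b2 n y * pker l1 l2 l3 b12 b23 b2 y z :=
            (Finset.sum_subset Finset.subset_union_right
              (fun y _ hy => by rw [mu_supp hy, zero_mul])).symm
        _ ≤ _ := mu_kernel hc n (Nat.succ_pos _) z
    have hL : Filter.Tendsto (fun j => ∑ y ∈ F, mu l1 l2 l3 b12 b23 b2 (φ j + 1) y
        * pker l1 l2 l3 b12 b23 b2 y z) Filter.atTop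
        (nhds (∑ y ∈ F, μ y * pker l1 l2 l3 b12 b23 b2 y z)) :=
      tendsto_finset_sum F (fun y _ => (hpt y).mul_const _)
    have hR : Filter.Tendsto (fun j => mu l1 l2 l3 b12 b23 b2 (φ j + 1) z
        + 1 / ((φ j + 1 : ℕ) : ℝ)) Filter.atTop (nhds (μ z + 0)) := (hpt z).add hone
    rw [add_zero] at hR
    exact le_of_tendsto_of_tendsto' hL hR hn
  have hsum2 : ∀ z, Summable (fun y => μ y * pker l1 l2 l3 b12 b23 b2 y z) := by
    intro z
    refine Summable.of_nonneg_of_le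
      (fun y => mul_nonneg (hμ0 y) (pker_nonneg hc y z))
      (fun y => ?_) hsumμ
    exact mul_le_of_le_one_right (hμ0 y) (pker_le_one hc y z)
  have hsub : ∀ z, ∑' y : ℤ × ℤ, μ y * pker l1 l2 l3 b12 b23 b2 y z ≤ μ z :=
    fun z => Summable.tsum_le_of_sum_le (hsum2 z) (hsubF z)
  -- Tonelli
  have hrowval : ∀ y, ∑' z : ℤ × ℤ, μ y * pker l1 l2 l3 b12 b23 b2 y z = μ y := by
    intro y
    rw [tsum_mul_left, tsum_pker, mul_one]
  have hjoint : Summable (fun p : (ℤ × ℤ) × (ℤ × ℤ) =>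
      μ p.1 * pker l1 l2 l3 b12 b23 b2 p.1 p.2) := by
    rw [summable_prod_of_nonneg (fun p => mul_nonneg (hμ0 _) (pker_nonneg hc _ _))]
    constructor
    · exact fun y => (summable_pker_row y).mul_left (μ y)
    · exact (summable_congr (fun y => (hrowval y))).2 hsumμ
  have hswap : ∑' (z : ℤ × ℤ) (y : ℤ × ℤ), μ y * pker l1 l2 l3 b12 b23 b2 y z
      = ∑' (y : ℤ × ℤ) (z : ℤ × ℤ), μ y * pker l1 l2 l3 b12 b23 b2 y z :=
    Summable.tsum_comm' hjoint (fun y => (summable_pker_row y).mul_left (μ y)) (fun z => hsum2 z)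
  have hgsum : Summable (fun z => ∑' y : ℤ × ℤ, μ y * pker l1 l2 l3 b12 b23 b2 y z) := by
    refine Summable.of_nonneg_of_le
      (fun z => tsum_nonneg (fun y => mul_nonneg (hμ0 y) (pker_nonneg hc y z)))
      (fun z => hsub z) hsumμ
  have htot : ∑' z : ℤ × ℤ, (μ z - ∑' y : ℤ × ℤ, μ y * pker l1 l2 l3 b12 b23 b2 y z) = 0 := by
    rw [Summable.tsum_sub hsumμ hgsum, hswap]
    have : ∑' (y : ℤ × ℤ) (z : ℤ × ℤ), μ y * pker l1 l2 l3 b12 b23 b2 y z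
        = ∑' y : ℤ × ℤ, μ y := tsum_congr hrowval
    rw [this, sub_self]
  have hpteq : ∀ z, ∑' y : ℤ × ℤ, μ y * pker l1 l2 l3 b12 b23 b2 y z = μ z := by
    intro z
    have hsd : Summable (fun w => μ w - ∑' y : ℤ × ℤ, μ y * pker l1 l2 l3 b12 b23 b2 y w) :=
      hsumμ.sub hgsum
    have hz := Summable.le_tsum hsd z (fun w _ => by linarith [hsub w])
    rw [htot] at hz
    have := hsub z
    linarith
  -- normalize
  set c := ∑' z : ℤ × ℤ, μ z with hcdef
  refine ⟨fun z => c⁻¹ * μ z, fun z => mul_nonneg (inv_nonneg.2 htsumμ_pos.le) (hμ0 z),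
    hsumμ.mul_left c⁻¹, ?_, ?_⟩
  · rw [tsum_mul_left, ← hcdef, inv_mul_cancel₀ (ne_of_gt htsumμ_pos)]
  · intro z
    have hptw : (fun y => (c⁻¹ * μ y) * pker l1 l2 l3 b12 b23 b2 y z)
        = (fun y => c⁻¹ * (μ y * pker l1 l2 l3 b12 b23 b2 y z)) := by
      funext y; ring
    constructor
    · rw [hptw]; exact (hsum2 z).mul_left c⁻¹
    · rw [hptw, tsum_mul_left, hpteq]

end Kernel

end Stmt16

/-- ergodicity: if `λ₁ < λ₂` and `λ₁ < λ₃`, the embedded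
relative-coordinate chain of the three-processor cascade model admits an invariant
probability distribution `π` on `ℤ²`. -/
theorem stmt16 (l1 l2 l3 b12 b23 : ℝ)
    (hl1 : 0 < l1) (hl2 : 0 < l2) (hl3 : 0 < l3) (hb12 : 0 < b12) (hb23 : 0 < b23)
    (hsum : l1 + l2 + l3 + b12 + b23 = 1) (h12 : l1 < l2) (h13 : l1 < l3) :
    ∃ π : ℤ × ℤ → ℝ, (∀ y, 0 ≤ π y) ∧ Summable π ∧ (∑' y : ℤ × ℤ, π y) = 1 ∧
      ∀ z : ℤ × ℤ,
        Summable (fun y : ℤ × ℤ => π y * pker l1 l2 l3 b12 b23 (l2 / (l2 + b12)) y z) ∧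
        (∑' y : ℤ × ℤ, π y * pker l1 l2 l3 b12 b23 (l2 / (l2 + b12)) y z) = π z := by
  have hc : Stmt16.Ctx l1 l2 l3 b12 b23 (l2 / (l2 + b12)) :=
    ⟨hl1, hl2, hl3, hb12, hb23, hsum, h12, h13,
      div_pos hl2 (by linarith), (div_lt_one (by linarith)).2 (by linarith)⟩
  exact Stmt16.exists_inv hc
end
end

section
/- If λ₁<λ₂, then the function f(y)=|y| satisfies the Foster–Lyapunov drift condition for the two-processor embedded chain: there exist ε>0 and a finite set A⊆ℤ such that Σ_z p_{yz}·|z| − |y| < −ε for every y∈ℤ∖A, and Σ_z p_{yz}·|z| < ∞ for every y∈A. -/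
noncomputable section

/-- Transition probabilities of the embedded relative-coordinate chain of the
two-processor cascade model on `ℤ`: `p_{i,i+1} = λ₂`, `p_{i,i−1} = λ₁`,
`p_{i,0} = β₁₂` for `i ≥ 0`, `p_{i,i} = β₁₂` for `i < 0` (probabilities assigned
to the same target state add). -/
def pker2 (l1 l2 b12 : ℝ) (i j : ℤ) : ℝ :=
  (if j = i + 1 then l2 else 0) + (if j = i - 1 then l1 else 0) +
    (if 0 ≤ i ∧ j = 0 then b12 else 0) + (if i < 0 ∧ j = i then b12 else 0)

lemma pker2_zero_off (l1 l2 b12 : ℝ) (y z : ℤ)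
    (hz : z ∉ ({y - 1, y, y + 1, 0} : Finset ℤ)) :
    pker2 l1 l2 b12 y z * |(z : ℝ)| = 0 := by
  simp only [Finset.mem_insert, Finset.mem_singleton, not_or] at hz
  obtain ⟨h1, h2, h3, h4⟩ := hz
  simp [pker2, h1, h2, h3, h4]

lemma pker2_summable (l1 l2 b12 : ℝ) (y : ℤ) :
    Summable (fun z : ℤ => pker2 l1 l2 b12 y z * |(z : ℝ)|) :=
  summable_of_ne_finset_zero (s := {y - 1, y, y + 1, 0}) (pker2_zero_off l1 l2 b12 y)

lemma pker2_tsum (l1 l2 b12 : ℝ) (y : ℤ) :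
    (∑' z : ℤ, pker2 l1 l2 b12 y z * |(z : ℝ)|) =
      ∑ z ∈ ({y - 1, y, y + 1, 0} : Finset ℤ), pker2 l1 l2 b12 y z * |(z : ℝ)| :=
  tsum_eq_sum (pker2_zero_off l1 l2 b12 y)

lemma tsum_neg_case (l1 l2 b12 : ℝ) (y : ℤ) (hy : y ≤ -2) :
    (∑' z : ℤ, pker2 l1 l2 b12 y z * |(z : ℝ)|) =
      l1 * |((y : ℝ) - 1)| + b12 * |(y : ℝ)| + l2 * |((y : ℝ) + 1)| := by
  rw [pker2_tsum]
  rw [Finset.sum_insert (by simp; omega), Finset.sum_insert (by simp; omega),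
    Finset.sum_insert (by simp; omega), Finset.sum_singleton]
  have c1 : ¬ (y - 1 = y + 1) := by omega
  have c2 : ¬ ((0:ℤ) ≤ y) := by omega
  have c3 : ¬ (y - 1 = y) := by omega
  have c4 : ¬ (y = y + 1) := by omega
  have c5 : ¬ (y = y - 1) := by omega
  have c6 : (y : ℤ) < 0 := by omega
  have c7 : ¬ (y + 1 = y - 1) := by omega
  have c8 : ¬ (y + 1 = y) := by omega
  have c9 : ¬ ((0:ℤ) = y + 1) := by omega
  have c10 : ¬ ((0:ℤ) = y - 1) := by omega
  have c11 : ¬ ((0:ℤ) = y) := by omega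
  have v1 : pker2 l1 l2 b12 y (y - 1) = l1 := by simp [pker2, c1, c2, c3]
  have v2 : pker2 l1 l2 b12 y y = b12 := by simp [pker2, c2, c4, c5, c6]
  have v3 : pker2 l1 l2 b12 y (y + 1) = l2 := by simp [pker2, c2, c7, c8]
  have v4 : pker2 l1 l2 b12 y 0 = 0 := by simp [pker2, c2, c9, c10, c11]
  rw [v1, v2, v3, v4]
  push_cast
  ring

lemma tsum_pos_case (l1 l2 b12 : ℝ) (y : ℤ) (hy : 2 ≤ y) :
    (∑' z : ℤ, pker2 l1 l2 b12 y z * |(z : ℝ)|) =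
      l1 * |((y : ℝ) - 1)| + l2 * |((y : ℝ) + 1)| := by
  rw [pker2_tsum]
  rw [Finset.sum_insert (by simp; omega), Finset.sum_insert (by simp; omega),
    Finset.sum_insert (by simp; omega), Finset.sum_singleton]
  have c1 : ¬ (y - 1 = y + 1) := by omega
  have c2' : ¬ ((y:ℤ) < 0) := by omega
  have c3 : ¬ (y - 1 = 0) := by omega
  have c4 : ¬ (y = y + 1) := by omega
  have c5 : ¬ (y = y - 1) := by omega
  have c6 : ¬ (y = 0) := by omega
  have c7 : ¬ (y + 1 = y - 1) := by omega
  have c8 : ¬ (y + 1 = 0) := by omega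
  have v1 : pker2 l1 l2 b12 y (y - 1) = l1 := by simp [pker2, c1, c2', c3]
  have v2 : pker2 l1 l2 b12 y y = 0 := by simp [pker2, c2', c4, c5, c6]
  have v3 : pker2 l1 l2 b12 y (y + 1) = l2 := by simp [pker2, c2', c7, c8]
  rw [v1, v2, v3]
  simp only [Int.cast_zero, abs_zero, mul_zero, add_zero, zero_mul, zero_add]
  push_cast
  ring

/-- if `λ₁ < λ₂`, the function `f(y) = |y|` satisfies the
Foster–Lyapunov drift condition for the two-processor embedded chain: there are
`ε > 0` and a finite set `A ⊆ ℤ` with `Σ_z p_{yz}|z| − |y| < −ε` for every `y ∉ A`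
and `Σ_z p_{yz}|z| < ∞` for every `y ∈ A`. -/
theorem stmt17 (l1 l2 b12 : ℝ) (hl1 : 0 < l1) (hl2 : 0 < l2) (hb12 : 0 < b12)
    (hsum : l1 + l2 + b12 = 1) (h : l1 < l2) :
    ∃ ε > (0 : ℝ), ∃ A : Finset ℤ,
      (∀ y : ℤ, y ∉ A →
        Summable (fun z : ℤ => pker2 l1 l2 b12 y z * |(z : ℝ)|) ∧
        (∑' z : ℤ, pker2 l1 l2 b12 y z * |(z : ℝ)|) - |(y : ℝ)| < -ε) ∧
      (∀ y ∈ A, Summable (fun z : ℤ => pker2 l1 l2 b12 y z * |(z : ℝ)|)) := by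
  set ε : ℝ := (l2 - l1) / 2 with hε
  have hεpos : 0 < ε := by simp [hε]; linarith
  set N : ℤ := max 2 ⌈(l2 - l1 + ε) / b12⌉ with hN
  have hN2 : (2 : ℤ) ≤ N := le_max_left _ _
  refine ⟨ε, hεpos, Finset.Icc 0 N, ?_, fun y _ => pker2_summable l1 l2 b12 y⟩
  intro y hy
  refine ⟨pker2_summable l1 l2 b12 y, ?_⟩
  simp only [Finset.mem_Icc, not_and, not_le] at hy
  by_cases hy0 : 0 ≤ y
  · -- y > N ≥ 2
    have hyN : N < y := hy hy0
    have hy2 : 2 ≤ y := by omega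
    rw [tsum_pos_case l1 l2 b12 y hy2]
    have hYr : (2 : ℝ) ≤ (y : ℝ) := by exact_mod_cast hy2
    rw [abs_of_pos (by linarith : (0:ℝ) < (y:ℝ) - 1),
      abs_of_pos (by linarith : (0:ℝ) < (y:ℝ) + 1),
      abs_of_pos (by linarith : (0:ℝ) < (y:ℝ))]
    have hceil : (l2 - l1 + ε) / b12 ≤ (⌈(l2 - l1 + ε) / b12⌉ : ℝ) := Int.le_ceil _
    have hNx : (l2 - l1 + ε) / b12 ≤ (N : ℝ) := by
      refine hceil.trans ?_
      exact_mod_cast Int.cast_le.mpr (le_max_right 2 _)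
    have hYN : (N : ℝ) < (y : ℝ) := by exact_mod_cast hyN
    have hkey : l2 - l1 + ε < b12 * (y : ℝ) := by
      have := (div_le_iff₀ hb12).mp hNx
      nlinarith
    have hrw : l1 * ((y:ℝ) - 1) + l2 * ((y:ℝ) + 1) - (y:ℝ)
        = (l1 + l2 + b12 - 1) * (y:ℝ) - b12 * (y:ℝ) + (l2 - l1) := by ring
    rw [hrw, hsum]
    linarith
  · -- y < 0
    push_neg at hy0
    by_cases hy1 : y = -1
    · subst hy1
      rw [pker2_tsum]
      have hs : ({(-1:ℤ) - 1, -1, (-1) + 1, 0} : Finset ℤ) = {-2, -1, 0} := by decide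
      rw [hs, Finset.sum_insert (by decide), Finset.sum_insert (by decide),
        Finset.sum_singleton]
      have v1 : pker2 l1 l2 b12 (-1) (-2) = l1 := by norm_num [pker2]
      have v2 : pker2 l1 l2 b12 (-1) (-1) = b12 := by norm_num [pker2]
      have v3 : pker2 l1 l2 b12 (-1) 0 = l2 := by norm_num [pker2]
      rw [v1, v2, v3]
      push_cast
      norm_num
      linarith
    · have hy2 : y ≤ -2 := by omega
      rw [tsum_neg_case l1 l2 b12 y hy2]
      have hYr : (y : ℝ) ≤ -2 := by exact_mod_cast hy2
      rw [abs_of_neg (by linarith : (y:ℝ) - 1 < 0),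
        abs_of_neg (by linarith : (y:ℝ) < 0),
        abs_of_neg (by linarith : (y:ℝ) + 1 < 0)]
      have hrw : l1 * -((y:ℝ) - 1) + b12 * -(y:ℝ) + l2 * -((y:ℝ) + 1) - -(y:ℝ)
          = (1 - (l1 + l2 + b12)) * (y:ℝ) + (l1 - l2) := by ring
      rw [hrw, hsum]
      simp [hε]
      linarith
end
end

section
/- If λ₁<λ₂, then the two-processor embedded chain admits an invariant probability distribution, i.e. there exists a probability mass function π on ℤ such that Σ_y π(y)·p_{yz} = π(z) for every z∈ℤ. -/
/-!
The invariant measure is two-sided geometric: `π z = r ^ z` for `z ≥ 0` and `π z = s ^ (-z)`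
for `z ≤ 0`. Away from `0` the balance equations only involve nearest-neighbour moves (and, on
the negative side, the self-loop of weight `β₁₂`), so they reduce to `λ₁ r² + λ₂ = r` on the right
and, using `λ₁ + λ₂ + β₁₂ = 1`, to `λ₂ s = λ₁` on the left. The first has a root `r ∈ (0, 1)` by
the intermediate value theorem since `λ₁ + λ₂ < 1`, and `s = λ₁ / λ₂ < 1` because `λ₁ < λ₂`;
hence `π` is summable. The balance at `0`, which collects the resets `β₁₂ ∑_{y ≥ 0} π y`, then
holds by conservation of mass.
-/

noncomputable section

open Set

theorem exists_mem_Ioo_mul_sq_add_eq {a c : ℝ} (hc : 0 < c) (hac : a + c < 1) :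
    ∃ r ∈ Ioo (0 : ℝ) 1, a * r ^ 2 + c = r := by
  have hcont : ContinuousOn (fun r : ℝ => a * r ^ 2 + c - r) (Icc 0 1) := by fun_prop
  obtain ⟨r, hr, hroot⟩ := intermediate_value_Ioo' zero_le_one hcont
    (show (0 : ℝ) ∈ Ioo (a * 1 ^ 2 + c - 1) (a * 0 ^ 2 + c - 0) by constructor <;> linarith)
  exact ⟨r, hr, by linarith [hroot]⟩

theorem exists_invariant_distribution_of_hasSum {α : Type*} {P : α → α → ℝ} {f : α → ℝ}
    {T : ℝ} (hf : ∀ y, 0 ≤ f y) (hfT : HasSum f T) (hT : 0 < T)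
    (hinv : ∀ z, HasSum (fun y => f y * P y z) (f z)) :
    ∃ π : α → ℝ, (∀ y, 0 ≤ π y) ∧ Summable π ∧ (∑' y, π y) = 1 ∧
      ∀ z, Summable (fun y => π y * P y z) ∧ (∑' y, π y * P y z) = π z := by
  refine ⟨fun y => T⁻¹ * f y, fun y => mul_nonneg (inv_nonneg.2 hT.le) (hf y),
    (hfT.mul_left _).summable, by rw [(hfT.mul_left _).tsum_eq, inv_mul_cancel₀ hT.ne'],
    fun z => ?_⟩
  have h := (hinv z).mul_left T⁻¹
  simp only [← mul_assoc] at h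
  exact ⟨h.summable, h.tsum_eq⟩

theorem hasSum_mul_pker2 {π : ℤ → ℝ} {A : ℝ} (hA : HasSum ({y | 0 ≤ y}.indicator π) A)
    (l1 l2 b12 : ℝ) (z : ℤ) :
    HasSum (fun y => π y * pker2 l1 l2 b12 y z)
      (l2 * π (z - 1) + l1 * π (z + 1) + (if z = 0 then b12 * A else 0) +
        if z < 0 then b12 * π z else 0) := by
  simp only [pker2, mul_add]
  refine ((HasSum.add ?_ ?_).add ?_).add ?_
  · convert hasSum_single (z - 1) fun y (hy : y ≠ z - 1) => ?_ using 1
    · simp [mul_comm]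
    · rw [if_neg (by omega), mul_zero]
  · convert hasSum_single (z + 1) fun y (hy : y ≠ z + 1) => ?_ using 1
    · simp [mul_comm]
    · rw [if_neg (by omega), mul_zero]
  · split_ifs with hz
    · refine (hA.mul_left b12).congr_fun fun y => ?_
      by_cases hy : 0 ≤ y <;> simp [hz, hy, mul_comm]
    · convert hasSum_zero with y
      rw [if_neg (by omega), mul_zero]
  · split_ifs with hz
    · convert hasSum_single z fun y (hy : y ≠ z) => ?_ using 1
      · simp [hz, mul_comm]
      · rw [if_neg (by omega), mul_zero]
    · convert hasSum_zero with y
      rw [if_neg (by omega), mul_zero]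

def twoSidedGeom (r s : ℝ) (z : ℤ) : ℝ :=
  if 0 ≤ z then r ^ z else s ^ (-z)

section twoSidedGeom

variable {r s : ℝ}

theorem twoSidedGeom_of_nonneg {z : ℤ} (hz : 0 ≤ z) : twoSidedGeom r s z = r ^ z :=
  if_pos hz

theorem twoSidedGeom_of_nonpos {z : ℤ} (hz : z ≤ 0) : twoSidedGeom r s z = s ^ (-z) := by
  rcases hz.lt_or_eq with hz | rfl
  · exact if_neg hz.not_ge
  · simp [twoSidedGeom]

theorem twoSidedGeom_nonneg (hr : 0 ≤ r) (hs : 0 ≤ s) (z : ℤ) : 0 ≤ twoSidedGeom r s z := by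
  unfold twoSidedGeom
  split_ifs <;> positivity

theorem hasSum_indicator_twoSidedGeom (hr0 : 0 ≤ r) (hr1 : r < 1) :
    HasSum ({y | 0 ≤ y}.indicator (twoSidedGeom r s)) (1 - r)⁻¹ := by
  simpa using HasSum.of_nat_of_neg_add_one (f := {y | 0 ≤ y}.indicator (twoSidedGeom r s))
    (by simpa [twoSidedGeom] using hasSum_geometric_of_lt_one hr0 hr1)
    (hasSum_zero.congr_fun fun n => Set.indicator_of_notMem (by simp; omega) _)

theorem hasSum_twoSidedGeom (hr0 : 0 ≤ r) (hr1 : r < 1) (hs0 : 0 ≤ s) (hs1 : s < 1) :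
    HasSum (twoSidedGeom r s) ((1 - r)⁻¹ + s * (1 - s)⁻¹) := by
  refine .of_nat_of_neg_add_one ?_ ?_
  · simpa [twoSidedGeom] using hasSum_geometric_of_lt_one hr0 hr1
  · refine ((hasSum_geometric_of_lt_one hs0 hs1).mul_left s).congr_fun fun n => ?_
    rw [twoSidedGeom_of_nonpos (by omega), neg_neg, ← pow_succ', ← zpow_natCast]
    push_cast
    rfl

theorem hasSum_twoSidedGeom_mul_pker2 {l1 l2 b12 : ℝ} (hsum : l1 + l2 + b12 = 1)
    (hr0 : 0 < r) (hr1 : r < 1) (hr : l1 * r ^ 2 + l2 = r) (hs0 : 0 < s) (hs : l2 * s = l1)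
    (z : ℤ) :
    HasSum (fun y => twoSidedGeom r s y * pker2 l1 l2 b12 y z) (twoSidedGeom r s z) := by
  convert hasSum_mul_pker2 (hasSum_indicator_twoSidedGeom hr0.le hr1) l1 l2 b12 z using 1
  rcases lt_trichotomy z 0 with hz | rfl | hz
  · obtain ⟨m, rfl⟩ : ∃ m : ℤ, z = -m - 1 := ⟨-z - 1, by ring⟩
    simp only [twoSidedGeom_of_nonpos (by omega : -m - 1 - 1 ≤ 0),
      twoSidedGeom_of_nonpos (by omega : -m - 1 + 1 ≤ 0), twoSidedGeom_of_nonpos hz.le,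
      if_neg hz.ne, if_pos hz, show -(-m - 1 - 1) = m + 2 by ring, show -(-m - 1) = m + 1 by ring,
      show -(-m - 1 + 1) = m by ring, zpow_add₀ hs0.ne', zpow_one, zpow_two]
    linear_combination (-s ^ m) * ((s - 1) * hs + s * hsum)
  · have h1r : 1 - r ≠ 0 := by linarith
    rw [if_pos rfl, if_neg (lt_irrefl 0), zero_sub, zero_add, twoSidedGeom_of_nonneg le_rfl,
      twoSidedGeom_of_nonneg zero_le_one, twoSidedGeom_of_nonpos (by norm_num), neg_neg,
      zpow_zero, zpow_one, zpow_one]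
    field_simp
    linear_combination (r - 1) * hs + hr - hsum
  · obtain ⟨k, rfl⟩ : ∃ k : ℤ, z = k + 1 := ⟨z - 1, by ring⟩
    rw [add_sub_cancel_right, show k + 1 + 1 = k + 2 by ring, if_neg hz.ne', if_neg hz.not_gt,
      twoSidedGeom_of_nonneg hz.le, twoSidedGeom_of_nonneg (show 0 ≤ k by omega),
      twoSidedGeom_of_nonneg (show 0 ≤ k + 2 by omega), zpow_add₀ hr0.ne', zpow_add₀ hr0.ne',
      zpow_one, zpow_two]
    linear_combination (-r ^ k) * hr

end twoSidedGeom

/-- if `λ₁ < λ₂`, the two-processor embedded chain admits an invariant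
probability distribution `π` on `ℤ`. -/
theorem stmt18 (l1 l2 b12 : ℝ) (hl1 : 0 < l1) (hl2 : 0 < l2) (hb12 : 0 < b12)
    (hsum : l1 + l2 + b12 = 1) (h : l1 < l2) :
    ∃ π : ℤ → ℝ, (∀ y, 0 ≤ π y) ∧ Summable π ∧ (∑' y : ℤ, π y) = 1 ∧
      ∀ z : ℤ, Summable (fun y : ℤ => π y * pker2 l1 l2 b12 y z) ∧
        (∑' y : ℤ, π y * pker2 l1 l2 b12 y z) = π z := by
  obtain ⟨r, ⟨hr0, hr1⟩, hr⟩ := exists_mem_Ioo_mul_sq_add_eq hl2 (by linarith : l1 + l2 < 1)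
  have hs0 : 0 < l1 / l2 := div_pos hl1 hl2
  have hs1 : l1 / l2 < 1 := (div_lt_one hl2).2 h
  have hmass : 0 < (1 - r)⁻¹ + l1 / l2 * (1 - l1 / l2)⁻¹ :=
    add_pos (inv_pos.2 (sub_pos.2 hr1)) (mul_pos hs0 (inv_pos.2 (sub_pos.2 hs1)))
  exact exists_invariant_distribution_of_hasSum (twoSidedGeom_nonneg hr0.le hs0.le)
    (hasSum_twoSidedGeom hr0.le hr1 hs0.le hs1) hmass
    (hasSum_twoSidedGeom_mul_pker2 hsum hr0 hr1 hr hs0 (mul_div_cancel₀ l1 hl2.ne'))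
end
end

section
/- If λ₁>λ₂, then there exists δ>0 such that the function f(y)=min(e^{δy},1) on ℤ satisfies the transience drift criterion for the two-processor embedded chain: there exist a set A⊆ℤ and a state α∈ℤ∖A such that Σ_z p_{yz}·f(z) − f(y) ≤ 0 for every y∈ℤ∖A, and f(α) < inf_{a∈A} f(a). -/
noncomputable section

/-- if `λ₁ > λ₂`, then there is `δ > 0` such that
`f(y) = min(e^{δy}, 1)` satisfies the transience drift criterion for the
two-processor embedded chain: there are a set `A ⊆ ℤ` and a state `α ∉ A` with
`Σ_z p_{yz} f(z) − f(y) ≤ 0` for every `y ∉ A`, and `f(α) < inf_{a ∈ A} f(a)`. -/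
theorem stmt19 (l1 l2 b12 : ℝ) (hl1 : 0 < l1) (hl2 : 0 < l2) (hb12 : 0 < b12)
    (hsum : l1 + l2 + b12 = 1) (h : l2 < l1) :
    ∃ δ > (0 : ℝ), ∃ A : Set ℤ, ∃ α : ℤ, α ∉ A ∧
      (∀ y : ℤ, y ∉ A →
        (∑' z : ℤ, pker2 l1 l2 b12 y z * min (Real.exp (δ * z)) 1)
          - min (Real.exp (δ * y)) 1 ≤ 0) ∧
      min (Real.exp (δ * α)) 1 < sInf ((fun y : ℤ => min (Real.exp (δ * y)) 1) '' A) := by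
  set δ := Real.log (l1 / l2) with hδdef
  have hratio : (1 : ℝ) < l1 / l2 := (one_lt_div hl2).mpr h
  have hδpos : 0 < δ := Real.log_pos hratio
  have hexpδ : Real.exp δ = l1 / l2 := Real.exp_log (by positivity)
  refine ⟨δ, hδpos, {y : ℤ | 0 ≤ y}, -1, by simp, ?_, ?_⟩
  · intro y hy
    have hy' : y < 0 := by simpa using hy
    have hkey : (∑' z : ℤ, pker2 l1 l2 b12 y z * min (Real.exp (δ * z)) 1)
        = ∑ z ∈ ({y - 1, y, y + 1} : Finset ℤ),
            pker2 l1 l2 b12 y z * min (Real.exp (δ * z)) 1 := by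
      refine tsum_eq_sum ?_
      intro b hb
      simp only [Finset.mem_insert, Finset.mem_singleton, not_or] at hb
      obtain ⟨h1, h2, h3⟩ := hb
      simp [pker2, h1, h2, h3, hy'.not_ge, hy'.ne]
    rw [hkey]
    have hne1 : (y - 1 : ℤ) ≠ y := by omega
    have hne2 : (y - 1 : ℤ) ≠ y + 1 := by omega
    have hne3 : (y : ℤ) ≠ y + 1 := by omega
    rw [Finset.sum_insert (by simp [hne1, hne2]),
      Finset.sum_insert (by simp [hne3]), Finset.sum_singleton]
    have hp1 : pker2 l1 l2 b12 y (y - 1) = l1 := by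
      simp [pker2, hy', hy'.not_ge, hne2, hne1, show (y - 1 : ℤ) ≠ 0 by omega]
    have hp2 : pker2 l1 l2 b12 y y = b12 := by
      simp [pker2, hy', hy'.not_ge, hne3, hne1.symm, show (y : ℤ) ≠ 0 by omega]
    have hp3 : pker2 l1 l2 b12 y (y + 1) = l2 := by
      simp [pker2, hy', hy'.not_ge, hne2.symm, hne3.symm, show y + 1 ≠ y - 1 by omega]
    rw [hp1, hp2, hp3]
    -- all three points are ≤ 0, so the min is the exponential
    have hm : ∀ z : ℤ, z ≤ 0 → min (Real.exp (δ * z)) 1 = Real.exp (δ * z) := by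
      intro z hz
      exact min_eq_left (Real.exp_le_one_iff.mpr
        (mul_nonpos_of_nonneg_of_nonpos hδpos.le (by exact_mod_cast hz)))
    rw [hm _ (by omega), hm _ (by omega), hm _ (by omega)]
    have e1 : Real.exp (δ * ((y - 1 : ℤ) : ℝ)) = Real.exp (δ * y) * (l2 / l1) := by
      push_cast
      rw [mul_sub, mul_one, Real.exp_sub, hexpδ]
      field_simp
    have e3 : Real.exp (δ * ((y + 1 : ℤ) : ℝ)) = Real.exp (δ * y) * (l1 / l2) := by
      push_cast
      rw [mul_add, mul_one, Real.exp_add, hexpδ]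
    rw [e1, e3]
    have hE : (0 : ℝ) < Real.exp (δ * y) := Real.exp_pos _
    have : l1 * (Real.exp (δ * y) * (l2 / l1)) + b12 * Real.exp (δ * y)
        + l2 * (Real.exp (δ * y) * (l1 / l2)) = Real.exp (δ * y) := by
      field_simp
      nlinarith [hsum]
    linarith
  · have himg : ((fun y : ℤ => min (Real.exp (δ * y)) 1) '' {y : ℤ | 0 ≤ y}) = {1} := by
      ext x
      constructor
      · rintro ⟨y, hy, rfl⟩
        have : (1 : ℝ) ≤ Real.exp (δ * y) :=
          Real.one_le_exp (mul_nonneg hδpos.le (by exact_mod_cast hy))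
        simp [min_eq_right this]
      · rintro rfl
        exact ⟨0, by simp, by simp⟩
    rw [himg, csInf_singleton]
    have : Real.exp (δ * ((-1 : ℤ) : ℝ)) < 1 := by
      rw [Real.exp_lt_one_iff]
      push_cast
      nlinarith
    exact lt_of_le_of_lt (min_le_left _ _) this
end
end
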